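/- arXiv:2507.07619 — 10 statements merged into one kernel-verified Lean document; each statement's English description precedes it below -/
import Mathlib

section
/- Let E_A = {a_1,…,a_n} and E_B = {b_1,…,b_m} be finite sets, let m_A be a mass function on E_A and, for each i = 1,…,n, let m_{B,a_i} be a mass function on E_B. Set m_{B|A} = ⊗_{i=1}^n m_{B|a_i} (Dempster combination of the Smets conditional embeddings), m_{A,B} = m_A^↑ ⊗ m_{B|A} (the vacuous extension of m_A to E_A×E_B combined with m_{B|A}), and m_B = m_{A,B}^↓E_B. Then for every j = 1,…,m, Bel_{m_B}({b_j}) = Σ_{V ⊆ E_A} m_A(V) · ∏_{i : a_i ∈ V} Bel_{m_{B,a_i}}({b_j}). -/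
open Finset

/-- A Dempster–Shafer mass function on the finite type `α`:
nonnegative, at most one, vanishing on `∅`, and summing to one. -/
def IsMass {α : Type*} [Fintype α] [DecidableEq α] (m : Finset α → ℝ) : Prop :=
  m ∅ = 0 ∧ (∀ V : Finset α, 0 ≤ m V ∧ m V ≤ 1) ∧ (∑ V : Finset α, m V) = 1

/-- The belief function associated to a mass function: `Bel m W = ∑_{V ⊆ W} m V`. -/
def Bel {α : Type*} [Fintype α] [DecidableEq α] (m : Finset α → ℝ) (W : Finset α) : ℝ :=
  ∑ V ∈ Finset.univ.filter (fun V : Finset α => V ⊆ W), m V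

/-- The plausibility function associated to a mass function:
`Pl m W = ∑_{V ∩ W ≠ ∅} m V`. -/
def Pl {α : Type*} [Fintype α] [DecidableEq α] (m : Finset α → ℝ) (W : Finset α) : ℝ :=
  ∑ V ∈ Finset.univ.filter (fun V : Finset α => (V ∩ W).Nonempty), m V

/-- The degree of conflict between two mass functions. -/
def conflict {α : Type*} [Fintype α] [DecidableEq α] (m₁ m₂ : Finset α → ℝ) : ℝ :=
  ∑ p ∈ Finset.univ.filter (fun p : Finset α × Finset α => p.1 ∩ p.2 = ∅),
    m₁ p.1 * m₂ p.2

/-- Dempster's rule of combination: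
`(m₁ ⊗ m₂)(V) = (1 - k)⁻¹ ∑_{V₁ ∩ V₂ = V} m₁(V₁) m₂(V₂)` for `V ≠ ∅`, `0` on `∅`. -/
noncomputable def dempster {α : Type*} [Fintype α] [DecidableEq α] (m₁ m₂ : Finset α → ℝ) :
    Finset α → ℝ := fun V =>
  if V = ∅ then 0
  else (1 - conflict m₁ m₂)⁻¹ *
    ∑ p ∈ Finset.univ.filter (fun p : Finset α × Finset α => p.1 ∩ p.2 = V),
      m₁ p.1 * m₂ p.2

/-- The vacuous mass function on `α` (all mass on the full set). -/
def vacuous (α : Type*) [Fintype α] [DecidableEq α] : Finset α → ℝ :=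
  fun V => if V = Finset.univ then 1 else 0

/-- Iterated Dempster combination `⊗` of a list of mass functions. -/
noncomputable def dempsterList {α : Type*} [Fintype α] [DecidableEq α]
    (ms : List (Finset α → ℝ)) : Finset α → ℝ :=
  ms.foldl dempster (vacuous α)

/-- Vacuous extension of a mass function on `α` to `α × β`:
it assigns mass `m V` to `V ×ˢ univ` and `0` to sets not of this form. -/
def vacExt {α β : Type*} [Fintype α] [DecidableEq α] [Fintype β] [DecidableEq β]
    (m : Finset α → ℝ) : Finset (α × β) → ℝ := fun Y =>
  ∑ V ∈ Finset.univ.filter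
      (fun V : Finset α => V ×ˢ (Finset.univ : Finset β) = Y), m V

/-- Marginalization of a mass function on `α × β` to `α`. -/
def margFst {α β : Type*} [Fintype α] [DecidableEq α] [Fintype β] [DecidableEq β]
    (m : Finset (α × β) → ℝ) : Finset α → ℝ := fun V =>
  ∑ Y ∈ Finset.univ.filter
      (fun Y : Finset (α × β) => Y.image Prod.fst = V), m Y

/-- Marginalization of a mass function on `α × β` to `β`. -/
def margSnd {α β : Type*} [Fintype α] [DecidableEq α] [Fintype β] [DecidableEq β]
    (m : Finset (α × β) → ℝ) : Finset β → ℝ := fun W =>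
  ∑ Y ∈ Finset.univ.filter
      (fun Y : Finset (α × β) => Y.image Prod.snd = W), m Y

/-- Smets' conditional embedding of a mass function on `β`, given `a : α`:
it assigns mass `m V` to `({a} × V) ∪ ((α ∖ {a}) × β)` and `0` elsewhere. -/
def smets {α β : Type*} [Fintype α] [DecidableEq α] [Fintype β] [DecidableEq β]
    (a : α) (m : Finset β → ℝ) : Finset (α × β) → ℝ := fun Y =>
  ∑ V ∈ Finset.univ.filter
      (fun V : Finset β =>
        ({a} ×ˢ V) ∪ ((Finset.univ \ {a}) ×ˢ (Finset.univ : Finset β)) = Y), m V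

section Machinery
variable {n m : ℕ}

private def gset (f : Fin n → Finset (Fin m)) : Finset (Fin n × Fin m) :=
  Finset.univ.filter fun p => p.2 ∈ f p.1

private def Sset (a : Fin n) (W : Finset (Fin m)) : Finset (Fin n × Fin m) :=
  ({a} ×ˢ W) ∪ ((Finset.univ \ {a}) ×ˢ (Finset.univ : Finset (Fin m)))

private lemma mem_gset {f : Fin n → Finset (Fin m)} {p : Fin n × Fin m} :
    p ∈ gset f ↔ p.2 ∈ f p.1 := by simp [gset]

private lemma mem_Sset {a : Fin n} {W : Finset (Fin m)} {p : Fin n × Fin m} :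
    p ∈ Sset a W ↔ (p.1 = a → p.2 ∈ W) := by
  obtain ⟨i, b⟩ := p
  by_cases h : i = a <;> simp [Sset, h]

private lemma gset_inter_Sset {f : Fin n → Finset (Fin m)} {a : Fin n} {W : Finset (Fin m)}
    (hfa : f a = Finset.univ) :
    gset f ∩ Sset a W = gset (Function.update f a W) := by
  ext ⟨i, b⟩
  by_cases h : i = a
  · subst h
    simp [Finset.mem_inter, mem_gset, mem_Sset, hfa, Function.update_self]
  · simp [Finset.mem_inter, mem_gset, mem_Sset, h, Function.update_of_ne h]

private lemma prodUniv_inter_gset {V : Finset (Fin n)} {f : Fin n → Finset (Fin m)} :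
    (V ×ˢ (Finset.univ : Finset (Fin m))) ∩ gset f
      = gset (fun i => if i ∈ V then f i else ∅) := by
  ext ⟨i, b⟩
  by_cases h : i ∈ V <;> simp [Finset.mem_inter, Finset.mem_product, mem_gset, h]

private lemma gset_eq_empty {f : Fin n → Finset (Fin m)} :
    gset f = ∅ ↔ ∀ i, f i = ∅ := by
  simp only [Finset.eq_empty_iff_forall_notMem]
  constructor
  · intro h i b hb; exact h (i, b) (mem_gset.2 hb)
  · rintro h ⟨i, b⟩ hp; exact h i b (mem_gset.1 hp)

private lemma sum_pairs {γ : Type*} [Fintype γ] [DecidableEq γ] (M N : Finset γ → ℝ)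
    (Y : Finset γ) :
    ∑ p ∈ Finset.univ.filter (fun p : Finset γ × Finset γ => p.1 ∩ p.2 = Y), M p.1 * N p.2
      = ∑ Y1 : Finset γ, ∑ Y2 : Finset γ, if Y1 ∩ Y2 = Y then M Y1 * N Y2 else 0 := by
  rw [Finset.sum_filter, Fintype.sum_prod_type]

private lemma fiber_collapse {α γ : Type*} [Fintype α] [Fintype γ] [DecidableEq γ]
    (φ : α → Finset γ) (g : α → ℝ) (t : Finset γ → ℝ) :
    ∑ Y1 : Finset γ, (∑ x, if φ x = Y1 then g x else 0) * t Y1 = ∑ x, g x * t (φ x) := by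
  simp only [Finset.sum_mul]
  rw [Finset.sum_comm]
  refine Finset.sum_congr rfl fun x _ => ?_
  simp only [ite_mul, zero_mul]
  simp [Finset.sum_ite_eq]

private lemma prod_indic {α : Type*} [Fintype α] (P : α → Prop) [DecidablePred P] (g : α → ℝ) :
    ∏ i : α, (if P i then g i else 0) = if (∀ i, P i) then ∏ i, g i else 0 := by
  by_cases h : ∀ i, P i
  · simp [h]
  · rw [if_neg h]
    push_neg at h
    obtain ⟨i, hi⟩ := h
    exact Finset.prod_eq_zero (Finset.mem_univ i) (by simp [hi])

private lemma ite_sum {α : Type*} {c : Prop} [Decidable c] {s : Finset α} (f : α → ℝ) :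
    (if c then ∑ x ∈ s, f x else 0) = ∑ x ∈ s, if c then f x else 0 := by
  split_ifs <;> simp

/-- The mass function `⊗_{i ∈ s} smets i (mBa i)` in explicit form. -/
private noncomputable def Fmass (mBa : Fin n → Finset (Fin m) → ℝ) (s : Finset (Fin n)) :
    Finset (Fin n × Fin m) → ℝ := fun Y =>
  ∑ f : Fin n → Finset (Fin m),
    if gset f = Y then
      (if (∀ i, i ∉ s → f i = Finset.univ) then ∏ i ∈ s, mBa i (f i) else 0)
    else 0

private lemma Fmass_empty (hn : 0 < n) (hm : 0 < m) {mBa : Fin n → Finset (Fin m) → ℝ}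
    (hB0 : ∀ i, mBa i ∅ = 0) (s : Finset (Fin n)) : Fmass mBa s ∅ = 0 := by
  refine Finset.sum_eq_zero fun f _ => ?_
  by_cases hg : gset f = ∅
  swap
  · rw [if_neg hg]
  rw [if_pos hg]
  rw [gset_eq_empty] at hg
  by_cases hgood : ∀ i, i ∉ s → f i = Finset.univ
  swap
  · rw [if_neg hgood]
  rw [if_pos hgood]
  rcases s.eq_empty_or_nonempty with he | ⟨i, hi⟩
  · exfalso
    have i : Fin n := ⟨0, hn⟩
    have h1 := hgood i (by simp [he])
    rw [hg i] at h1
    have : (⟨0, hm⟩ : Fin m) ∈ (Finset.univ : Finset (Fin m)) := Finset.mem_univ _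
    rw [← h1] at this
    exact absurd this (Finset.notMem_empty _)
  · exact Finset.prod_eq_zero hi (by rw [hg i, hB0 i])

private lemma update_reindex {a : Fin n}
    (T R : (Fin n → Finset (Fin m)) → Finset (Fin m) → ℝ)
    (h : ∀ f W, T f W = R (Function.update f a W) (f a)) :
    (∑ f : Fin n → Finset (Fin m), ∑ W : Finset (Fin m), T f W)
      = ∑ f : Fin n → Finset (Fin m), ∑ W : Finset (Fin m), R f W := by
  let e : ((Fin n → Finset (Fin m)) × Finset (Fin m)) ≃
      ((Fin n → Finset (Fin m)) × Finset (Fin m)) :=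
    { toFun := fun p => (Function.update p.1 a p.2, p.1 a)
      invFun := fun p => (Function.update p.1 a p.2, p.1 a)
      left_inv := fun p => by
        simp [Function.update_idem, Function.update_eq_self]
      right_inv := fun p => by
        simp [Function.update_idem, Function.update_eq_self] }
  calc (∑ f : Fin n → Finset (Fin m), ∑ W : Finset (Fin m), T f W)
      = ∑ p : (Fin n → Finset (Fin m)) × Finset (Fin m), T p.1 p.2 := by
        rw [Fintype.sum_prod_type]
    _ = ∑ p : (Fin n → Finset (Fin m)) × Finset (Fin m), R p.1 p.2 :=
        Fintype.sum_equiv e _ _ (fun p => by exact h p.1 p.2)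
    _ = ∑ f : Fin n → Finset (Fin m), ∑ W : Finset (Fin m), R f W := by
        rw [Fintype.sum_prod_type]

end Machinery

section Step
variable {n m : ℕ}

private lemma smets_fiber (a : Fin n) (mb : Finset (Fin m) → ℝ) :
    smets a mb = fun Y : Finset (Fin n × Fin m) =>
      ∑ W : Finset (Fin m), if Sset a W = Y then mb W else 0 := by
  funext Y
  rw [smets, Finset.sum_filter]
  rfl

private lemma step_core (hn : 0 < n) (hm : 0 < m) {mBa : Fin n → Finset (Fin m) → ℝ}
    (hB0 : ∀ i, mBa i ∅ = 0) {s : Finset (Fin n)} {a : Fin n} (ha : a ∉ s)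
    (Y : Finset (Fin n × Fin m)) :
    ∑ p ∈ Finset.univ.filter
        (fun p : Finset (Fin n × Fin m) × Finset (Fin n × Fin m) => p.1 ∩ p.2 = Y),
      Fmass mBa s p.1 * smets a (mBa a) p.2
    = Fmass mBa (insert a s) Y := by
  rw [sum_pairs]
  have hsplit : ∀ Y1 Y2 : Finset (Fin n × Fin m),
      (if Y1 ∩ Y2 = Y then Fmass mBa s Y1 * smets a (mBa a) Y2 else 0)
        = Fmass mBa s Y1 * (smets a (mBa a) Y2 * (if Y1 ∩ Y2 = Y then 1 else 0)) := by
    intro Y1 Y2; split_ifs <;> ring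
  simp only [hsplit]
  simp only [← Finset.mul_sum]
  simp only [Fmass]
  rw [fiber_collapse]
  simp only [smets_fiber a (mBa a)]
  simp only [fiber_collapse]
  simp only [Finset.mul_sum]
  have hpair : ∀ (f : Fin n → Finset (Fin m)) (W : Finset (Fin m)),
      (if (∀ i, i ∉ s → f i = Finset.univ) then ∏ i ∈ s, mBa i (f i) else 0) *
          (mBa a W * (if gset f ∩ Sset a W = Y then 1 else 0))
        = (fun f' U =>
            if U = Finset.univ then
              (if gset f' = Y then
                (if (∀ i, i ∉ insert a s → f' i = Finset.univ) then
                  ∏ i ∈ insert a s, mBa i (f' i)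
                 else 0)
              else 0)
            else 0) (Function.update f a W) (f a) := by
    intro f W
    simp only []
    by_cases hfa : f a = Finset.univ
    · rw [← gset_inter_Sset hfa, if_pos hfa]
      have hgood : (∀ i, i ∉ s → f i = Finset.univ)
          ↔ (∀ i, i ∉ insert a s → Function.update f a W i = Finset.univ) := by
        constructor
        · intro h i hi
          have hia : i ≠ a := fun he => hi (he ▸ Finset.mem_insert_self a s)
          rw [Function.update_of_ne hia]
          exact h i (fun hs => hi (Finset.mem_insert_of_mem hs))
        · intro h i hi
          by_cases hia : i = a
          · exact hia ▸ hfa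
          · have := h i (by simp [hia, hi])
            rwa [Function.update_of_ne hia] at this
      have hprod : ∏ i ∈ insert a s, mBa i (Function.update f a W i)
          = mBa a W * ∏ i ∈ s, mBa i (f i) := by
        rw [Finset.prod_insert ha, Function.update_self]
        congr 1
        refine Finset.prod_congr rfl fun i hi => ?_
        rw [Function.update_of_ne (fun h => ha (by rwa [h] at hi))]
      rw [hprod]
      simp only [hgood]
      split_ifs <;> ring
    · rw [if_neg (fun h : ∀ i, i ∉ s → f i = Finset.univ => hfa (h a ha)), zero_mul,
        if_neg hfa]
  refine (update_reindex (a := a) _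
    (fun f' U =>
      if U = Finset.univ then
        (if gset f' = Y then
          (if (∀ i, i ∉ insert a s → f' i = Finset.univ) then
            ∏ i ∈ insert a s, mBa i (f' i)
           else 0)
        else 0)
      else 0) hpair).trans ?_
  refine Finset.sum_congr rfl fun f _ => ?_
  rw [Finset.sum_ite_eq' Finset.univ (Finset.univ : Finset (Fin m))]
  simp

private lemma step_comb (hn : 0 < n) (hm : 0 < m) {mBa : Fin n → Finset (Fin m) → ℝ}
    (hB0 : ∀ i, mBa i ∅ = 0) {s : Finset (Fin n)} {a : Fin n} (ha : a ∉ s) :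
    dempster (Fmass mBa s) (smets a (mBa a)) = Fmass mBa (insert a s) := by
  have hk : conflict (Fmass mBa s) (smets a (mBa a)) = 0 := by
    rw [conflict, step_core hn hm hB0 ha ∅, Fmass_empty hn hm hB0]
  funext Y
  rw [dempster]
  by_cases hY : Y = ∅
  · rw [if_pos hY, hY, Fmass_empty hn hm hB0]
  · rw [if_neg hY, hk, step_core hn hm hB0 ha Y, sub_zero, inv_one, one_mul]

end Step

section Comb
variable {n m : ℕ}

private lemma gset_const_univ :
    gset (fun _ : Fin n => (Finset.univ : Finset (Fin m))) = Finset.univ := by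
  ext p; simp [mem_gset]

private lemma Fmass_base :
    Fmass (n := n) (m := m) mBa ∅ = vacuous (Fin n × Fin m) := by
  funext Y
  rw [Fmass]
  have h : ∀ f : Fin n → Finset (Fin m),
      (if gset f = Y then
        (if (∀ i, i ∉ (∅ : Finset (Fin n)) → f i = Finset.univ) then
          ∏ i ∈ (∅ : Finset (Fin n)), mBa i (f i) else 0)
       else 0)
      = if f = (fun _ => Finset.univ) then (if Y = Finset.univ then (1:ℝ) else 0) else 0 := by
    intro f
    by_cases hf : f = fun _ => Finset.univ
    · subst hf
      simp [gset_const_univ, eq_comm]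
    · have hx : ¬ ∀ i, i ∉ (∅ : Finset (Fin n)) → f i = Finset.univ := by
        intro h; exact hf (funext fun i => h i (Finset.notMem_empty i))
      rw [if_neg hx, if_neg hf, ite_self]
  simp only [h]
  rw [Finset.sum_ite_eq' Finset.univ (fun _ => Finset.univ : Fin n → Finset (Fin m))]
  simp [vacuous]

private lemma list_comb (hn : 0 < n) (hm : 0 < m) {mBa : Fin n → Finset (Fin m) → ℝ}
    (hB0 : ∀ i, mBa i ∅ = 0) :
    ∀ l : List (Fin n), l.Nodup →
      dempsterList (l.map fun i => smets i (mBa i)) = Fmass mBa l.toFinset := by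
  intro l
  induction l using List.reverseRecOn with
  | nil =>
    intro _
    simp only [List.map_nil, dempsterList, List.foldl_nil, List.toFinset_nil]
    exact (Fmass_base (mBa := mBa)).symm
  | append_singleton l a ih =>
    intro hnd
    have hl : l.Nodup := hnd.sublist (List.sublist_append_left l [a])
    have ha : a ∉ l := by
      have := List.disjoint_of_nodup_append hnd
      intro h; exact this h (List.mem_singleton_self a)
    have ha' : a ∉ l.toFinset := by simpa using ha
    rw [List.map_append, dempsterList, List.foldl_append]
    simp only [List.map_cons, List.map_nil, List.foldl_cons, List.foldl_nil]
    rw [show (List.foldl dempster (vacuous (Fin n × Fin m)) (l.map fun i => smets i (mBa i)))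
        = dempsterList (l.map fun i => smets i (mBa i)) from rfl]
    rw [ih hl, step_comb hn hm hB0 ha', List.toFinset_append]
    congr 1
    ext x
    simp [or_comm]

/-- The combined mass `mAB` in explicit form. -/
private noncomputable def Gmass (mA : Finset (Fin n) → ℝ) (mBa : Fin n → Finset (Fin m) → ℝ) :
    Finset (Fin n × Fin m) → ℝ := fun Y =>
  ∑ V : Finset (Fin n), ∑ f : Fin n → Finset (Fin m),
    if gset (fun i => if i ∈ V then f i else ∅) = Y then mA V * ∏ i, mBa i (f i) else 0

private lemma Gmass_empty {mA : Finset (Fin n) → ℝ} {mBa : Fin n → Finset (Fin m) → ℝ}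
    (hA0 : mA ∅ = 0) (hB0 : ∀ i, mBa i ∅ = 0) : Gmass mA mBa ∅ = 0 := by
  refine Finset.sum_eq_zero fun V _ => Finset.sum_eq_zero fun f _ => ?_
  by_cases hg : gset (fun i => if i ∈ V then f i else ∅) = ∅
  swap
  · rw [if_neg hg]
  rw [if_pos hg, gset_eq_empty] at *
  rcases V.eq_empty_or_nonempty with he | ⟨i, hi⟩
  · rw [he, hA0, zero_mul]
  · have hfi : f i = ∅ := by have := hg i; rwa [if_pos hi] at this
    rw [Finset.prod_eq_zero (Finset.mem_univ i) (by rw [hfi, hB0 i]), mul_zero]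

private lemma vacExt_fiber (mA : Finset (Fin n) → ℝ) :
    vacExt mA = fun Y : Finset (Fin n × Fin m) =>
      ∑ V : Finset (Fin n), if V ×ˢ (Finset.univ : Finset (Fin m)) = Y then mA V else 0 := by
  funext Y
  rw [vacExt, Finset.sum_filter]

private lemma core2 (mA : Finset (Fin n) → ℝ) (mBa : Fin n → Finset (Fin m) → ℝ)
    (Y : Finset (Fin n × Fin m)) :
    ∑ p ∈ Finset.univ.filter
        (fun p : Finset (Fin n × Fin m) × Finset (Fin n × Fin m) => p.1 ∩ p.2 = Y),
      vacExt mA p.1 * Fmass mBa Finset.univ p.2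
    = Gmass mA mBa Y := by
  rw [sum_pairs]
  have hsplit : ∀ Y1 Y2 : Finset (Fin n × Fin m),
      (if Y1 ∩ Y2 = Y then vacExt mA Y1 * Fmass mBa Finset.univ Y2 else 0)
        = vacExt mA Y1 * (Fmass mBa Finset.univ Y2 * (if Y1 ∩ Y2 = Y then 1 else 0)) := by
    intro Y1 Y2; split_ifs <;> ring
  simp only [hsplit]
  simp only [← Finset.mul_sum]
  simp only [vacExt_fiber mA]
  rw [fiber_collapse]
  simp only [Fmass]
  simp only [fiber_collapse]
  rw [Gmass]
  refine Finset.sum_congr rfl fun V _ => ?_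
  rw [Finset.mul_sum]
  refine Finset.sum_congr rfl fun f _ => ?_
  rw [prodUniv_inter_gset]
  have htriv : (∀ i : Fin n, i ∉ (Finset.univ : Finset (Fin n)) → f i = Finset.univ) := by
    simp
  rw [if_pos htriv]
  split_ifs <;> ring

private lemma mAB_eq (hn : 0 < n) (hm : 0 < m) {mA : Finset (Fin n) → ℝ}
    {mBa : Fin n → Finset (Fin m) → ℝ} (hA0 : mA ∅ = 0) (hB0 : ∀ i, mBa i ∅ = 0) :
    dempster (vacExt mA) (Fmass mBa Finset.univ) = Gmass mA mBa := by
  have hk : conflict (vacExt mA) (Fmass mBa Finset.univ) = 0 := by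
    rw [conflict, core2 mA mBa ∅, Gmass_empty hA0 hB0]
  funext Y
  rw [dempster]
  by_cases hY : Y = ∅
  · rw [if_pos hY, hY, Gmass_empty hA0 hB0]
  · rw [if_neg hY, hk, core2 mA mBa Y, sub_zero, inv_one, one_mul]

end Comb

section Final
variable {n m : ℕ}

private lemma image_snd_gsetV {V : Finset (Fin n)} {f : Fin n → Finset (Fin m)} {j : Fin m} :
    ((gset (fun i => if i ∈ V then f i else ∅)).image Prod.snd ⊆ {j})
      ↔ ∀ i, i ∈ V → f i ⊆ {j} := by
  constructor
  · intro h i hi b hb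
    have hbm : b ∈ (gset (fun i => if i ∈ V then f i else ∅)).image Prod.snd :=
      Finset.mem_image.2 ⟨(i, b), mem_gset.2 (by simp [hi, hb]), rfl⟩
    simpa using h hbm
  · intro h b hb
    obtain ⟨⟨i, b'⟩, hp, rfl⟩ := Finset.mem_image.1 hb
    have hm' : b' ∈ (if i ∈ V then f i else ∅) := mem_gset.1 hp
    by_cases hi : i ∈ V
    · rw [if_pos hi] at hm'
      exact h i hi hm'
    · rw [if_neg hi] at hm'
      exact absurd hm' (Finset.notMem_empty _)


private lemma final_calc {mA : Finset (Fin n) → ℝ} {mBa : Fin n → Finset (Fin m) → ℝ}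
    (hB1 : ∀ i, ∑ U : Finset (Fin m), mBa i U = 1) (j : Fin m) :
    Bel (margSnd (Gmass mA mBa)) {j}
      = ∑ V : Finset (Fin n), mA V * ∏ i ∈ V, Bel (mBa i) {j} := by
  have hbel : Bel (margSnd (Gmass mA mBa)) {j}
      = ∑ Y : Finset (Fin n × Fin m),
          if Y.image Prod.snd ⊆ {j} then Gmass mA mBa Y else 0 := by
    rw [Bel, Finset.sum_filter]
    simp only [margSnd, Finset.sum_filter, ite_sum]
    rw [Finset.sum_comm]
    refine Finset.sum_congr rfl fun Y _ => ?_
    have hsw : ∀ W : Finset (Fin m),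
        (if W ⊆ ({j} : Finset (Fin m)) then
            (if Y.image Prod.snd = W then Gmass mA mBa Y else 0) else 0)
          = if Y.image Prod.snd = W then
              (if W ⊆ ({j} : Finset (Fin m)) then Gmass mA mBa Y else 0) else 0 := by
      intro W; split_ifs <;> rfl
    simp only [hsw]
    rw [Finset.sum_ite_eq Finset.univ]
    simp
  rw [hbel]
  simp only [Gmass, ite_sum]
  rw [Finset.sum_comm]
  refine Finset.sum_congr rfl fun V _ => ?_
  rw [Finset.sum_comm]
  have hcol : ∀ f : Fin n → Finset (Fin m),
      (∑ Y : Finset (Fin n × Fin m),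
        if Y.image Prod.snd ⊆ ({j} : Finset (Fin m)) then
          (if gset (fun i => if i ∈ V then f i else ∅) = Y then mA V * ∏ i, mBa i (f i)
           else 0)
        else 0)
      = if (∀ i, i ∈ V → f i ⊆ ({j} : Finset (Fin m))) then mA V * ∏ i, mBa i (f i) else 0 := by
    intro f
    have hsw2 : ∀ Y : Finset (Fin n × Fin m),
        (if Y.image Prod.snd ⊆ ({j} : Finset (Fin m)) then
            (if gset (fun i => if i ∈ V then f i else ∅) = Y then mA V * ∏ i, mBa i (f i)
             else 0)
          else 0)
        = if gset (fun i => if i ∈ V then f i else ∅) = Y then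
            (if Y.image Prod.snd ⊆ ({j} : Finset (Fin m)) then mA V * ∏ i, mBa i (f i)
             else 0)
          else 0 := by
      intro Y; split_ifs <;> rfl
    simp only [hsw2]
    rw [Finset.sum_ite_eq Finset.univ]
    simp only [Finset.mem_univ, if_pos]
    by_cases hc : ∀ i, i ∈ V → f i ⊆ ({j} : Finset (Fin m))
    · rw [if_pos (image_snd_gsetV.2 hc), if_pos hc]
    · rw [if_neg (fun h => hc (image_snd_gsetV.1 h)), if_neg hc]
  simp only [hcol]
  have h4 : ∀ f : Fin n → Finset (Fin m),
      (if (∀ i, i ∈ V → f i ⊆ ({j} : Finset (Fin m))) then mA V * ∏ i, mBa i (f i) else 0)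
        = mA V * ∏ i, (if i ∈ V → f i ⊆ ({j} : Finset (Fin m)) then mBa i (f i) else 0) := by
    intro f
    rw [prod_indic (fun i => i ∈ V → f i ⊆ ({j} : Finset (Fin m)))]
    split_ifs <;> simp
  simp only [h4]
  rw [← Finset.mul_sum]
  congr 1
  calc (∑ f : Fin n → Finset (Fin m),
          ∏ i, (if i ∈ V → f i ⊆ ({j} : Finset (Fin m)) then mBa i (f i) else 0))
      = ∏ i, ∑ U : Finset (Fin m),
          (if i ∈ V → U ⊆ ({j} : Finset (Fin m)) then mBa i U else 0) := by
        have key : ∀ h : Fin n → Finset (Fin m) → ℝ,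
            (∑ f : Fin n → Finset (Fin m), ∏ i, h i (f i))
              = ∏ i, ∑ U : Finset (Fin m), h i U :=
          fun h => (Fintype.prod_sum _).symm
        exact key (fun i U => if i ∈ V → U ⊆ ({j} : Finset (Fin m)) then mBa i U else 0)
    _ = ∏ i, (if i ∈ V then Bel (mBa i) {j} else 1) := by
        refine Finset.prod_congr rfl fun i _ => ?_
        by_cases hi : i ∈ V
        · rw [if_pos hi, Bel, Finset.sum_filter]
          refine Finset.sum_congr rfl fun U _ => ?_
          simp [hi]
        · rw [if_neg hi]
          have hall : ∀ U : Finset (Fin m),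
              (if i ∈ V → U ⊆ ({j} : Finset (Fin m)) then mBa i U else 0) = mBa i U :=
            fun U => if_pos (fun h => absurd h hi)
          simp only [hall]
          exact hB1 i
    _ = ∏ i ∈ V, Bel (mBa i) {j} := by
        rw [Finset.prod_ite_mem Finset.univ V, Finset.univ_inter]


end Final


/-- For a credal chain link `A → B` with mass function `mA` on
`E_A = Fin n` and conditional mass functions `mBa i` on `E_B = Fin m`, letting
`m_{B|A} = ⊗ᵢ m_{B|aᵢ}` (Dempster combination of the Smets embeddings),
`m_{A,B} = mA^↑ ⊗ m_{B|A}` and `m_B = m_{A,B}^{↓E_B}`, the belief of each singleton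
`{b_j}` under `m_B` equals `∑_{V ⊆ E_A} mA(V) ∏_{i ∈ V} Bel_{mBa i}({b_j})`. -/
theorem belief_inference_lower (n m : ℕ) (hn : 0 < n) (hm : 0 < m)
    (mA : Finset (Fin n) → ℝ) (hA : IsMass mA)
    (mBa : Fin n → Finset (Fin m) → ℝ) (hB : ∀ i, IsMass (mBa i))
    (mBA : Finset (Fin n × Fin m) → ℝ)
    (hBA : mBA = dempsterList ((List.finRange n).map fun i => smets i (mBa i)))
    (mAB : Finset (Fin n × Fin m) → ℝ)
    (hAB : mAB = dempster (vacExt mA) mBA)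
    (mB : Finset (Fin m) → ℝ) (hmB : mB = margSnd mAB) :
    ∀ j : Fin m,
      Bel mB {j} = ∑ V : Finset (Fin n), mA V * ∏ i ∈ V, Bel (mBa i) {j} := by
  intro j
  have hA0 : mA ∅ = 0 := hA.1
  have hB0 : ∀ i, mBa i ∅ = 0 := fun i => (hB i).1
  have hB1 : ∀ i, ∑ U : Finset (Fin m), mBa i U = 1 := fun i => (hB i).2.2
  have hBA' : mBA = Fmass mBa Finset.univ := by
    rw [hBA, list_comb hn hm hB0 (List.finRange n) (List.nodup_finRange n),
      List.toFinset_finRange]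
  have hG : mAB = Gmass mA mBa := by
    rw [hAB, hBA', mAB_eq hn hm hA0 hB0]
  rw [hmB, hG]
  exact final_calc hB1 j
end

section
/- Let E_A = {a_1,…,a_n} and E_B = {b_1,…,b_m} be finite sets, let m_A be a mass function on E_A and, for each i = 1,…,n, let m_{B,a_i} be a mass function on E_B. Set m_{B|A} = ⊗_{i=1}^n m_{B|a_i} (Dempster combination of the Smets conditional embeddings), m_{A,B} = m_A^↑ ⊗ m_{B|A}, and m_B = m_{A,B}^↓E_B. Then for every j = 1,…,m, Pl_{m_B}({b_j}) = 1 − Σ_{V ⊆ E_A} m_A(V) · ∏_{i : a_i ∈ V} (1 − Pl_{m_{B,a_i}}({b_j})). -/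
open Finset

namespace DSAux
variable {n m : ℕ}

def Tset (v : Fin n → Finset (Fin m)) : Finset (Fin n × Fin m) :=
  Finset.univ.filter fun p => p.2 ∈ v p.1

lemma mem_Tset {v : Fin n → Finset (Fin m)} {p : Fin n × Fin m} :
    p ∈ Tset v ↔ p.2 ∈ v p.1 := by simp [Tset]

lemma Tset_inter (v w : Fin n → Finset (Fin m)) :
    Tset v ∩ Tset w = Tset (fun i => v i ∩ w i) := by
  ext p; simp [mem_Tset]

lemma Tset_eq_empty {v : Fin n → Finset (Fin m)} :
    Tset v = ∅ ↔ ∀ i, v i = ∅ := by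
  constructor
  · intro h i
    ext j
    simp only [Finset.notMem_empty, iff_false]
    intro hj
    have : (i, j) ∈ Tset v := mem_Tset.mpr hj
    rw [h] at this
    exact absurd this (Finset.notMem_empty _)
  · intro h
    rw [Finset.eq_empty_iff_forall_notMem]
    intro p hp
    rw [mem_Tset, h] at hp
    exact absurd hp (Finset.notMem_empty _)

lemma Tset_const_univ : Tset (fun _ : Fin n => (Finset.univ : Finset (Fin m))) = Finset.univ := by
  ext p; simp [mem_Tset]

lemma smets_set_eq (i : Fin n) (V : Finset (Fin m)) :
    ({i} ×ˢ V) ∪ ((Finset.univ \ {i}) ×ˢ (Finset.univ : Finset (Fin m)))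
      = Tset (Function.update (fun _ => Finset.univ) i V) := by
  ext ⟨p1, p2⟩
  by_cases h : p1 = i <;>
    simp [mem_Tset, Function.update_apply, h, Finset.mem_product, Prod.ext_iff]

lemma prod_univ_eq_Tset (U : Finset (Fin n)) :
    U ×ˢ (Finset.univ : Finset (Fin m))
      = Tset (fun i => if i ∈ U then Finset.univ else ∅) := by
  ext p
  by_cases h : p.1 ∈ U <;> simp [mem_Tset, h, Finset.mem_product]

/-- generic pairing lemma -/
lemma sum_pairs {α : Type*} [Fintype α] [DecidableEq α] {ι κ : Type*} [Fintype ι] [Fintype κ]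
    (S : ι → Finset α) (Tk : κ → Finset α) (f : ι → ℝ) (g : κ → ℝ) (Z : Finset α) :
    ∑ p ∈ Finset.univ.filter (fun p : Finset α × Finset α => p.1 ∩ p.2 = Z),
      (∑ x, if S x = p.1 then f x else 0) * (∑ y, if Tk y = p.2 then g y else 0)
    = ∑ x, ∑ y, if S x ∩ Tk y = Z then f x * g y else 0 := by
  have key : ∀ Y₁ Y₂ : Finset α,
      (if Y₁ ∩ Y₂ = Z then
        (∑ x, if S x = Y₁ then f x else 0) * (∑ y, if Tk y = Y₂ then g y else 0) else 0)
      = ∑ r : ι × κ, (if S r.1 = Y₁ then (if Tk r.2 = Y₂ then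
          (if Y₁ ∩ Y₂ = Z then f r.1 * g r.2 else 0) else 0) else 0) := by
    intro Y₁ Y₂
    rw [Fintype.sum_prod_type]
    by_cases h : Y₁ ∩ Y₂ = Z
    · rw [if_pos h, Finset.sum_mul_sum]
      refine Finset.sum_congr rfl fun x _ => Finset.sum_congr rfl fun y _ => ?_
      simp only [ite_mul, mul_ite, zero_mul, mul_zero, if_pos h]
      split_ifs <;> simp
    · rw [if_neg h]
      simp [h]
  calc ∑ p ∈ Finset.univ.filter (fun p : Finset α × Finset α => p.1 ∩ p.2 = Z),
      (∑ x, if S x = p.1 then f x else 0) * (∑ y, if Tk y = p.2 then g y else 0)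
      = ∑ q : Finset α × Finset α, ∑ r : ι × κ,
          (if S r.1 = q.1 then (if Tk r.2 = q.2 then
            (if q.1 ∩ q.2 = Z then f r.1 * g r.2 else 0) else 0) else 0) := by
        rw [Finset.sum_filter]
        exact Finset.sum_congr rfl fun q _ => key q.1 q.2
    _ = ∑ r : ι × κ, ∑ q : Finset α × Finset α,
          (if S r.1 = q.1 then (if Tk r.2 = q.2 then
            (if q.1 ∩ q.2 = Z then f r.1 * g r.2 else 0) else 0) else 0) := Finset.sum_comm
    _ = ∑ x, ∑ y, if S x ∩ Tk y = Z then f x * g y else 0 := by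
        rw [Fintype.sum_prod_type]
        refine Finset.sum_congr rfl fun x _ => Finset.sum_congr rfl fun y _ => ?_
        rw [Fintype.sum_prod_type]
        have h1 : ∀ Y₁ : Finset α, (∑ Y₂ : Finset α, if S x = Y₁ then (if Tk y = Y₂ then
            (if Y₁ ∩ Y₂ = Z then f x * g y else 0) else 0) else 0)
            = if S x = Y₁ then (if Y₁ ∩ Tk y = Z then f x * g y else 0) else 0 := by
          intro Y₁
          by_cases h : S x = Y₁
          · simp only [if_pos h, Finset.sum_ite_eq, Finset.mem_univ, if_pos]
          · simp [h]
        simp only [h1, Finset.sum_ite_eq, Finset.mem_univ, if_pos]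

end DSAux
namespace DSAux
variable {n m : ℕ}

/-- smets as an ite-sum over the Tset parametrization -/
lemma smets_eq_ite (i : Fin n) (mi : Finset (Fin m) → ℝ) (Y : Finset (Fin n × Fin m)) :
    smets i mi Y = ∑ V : Finset (Fin m),
      if Tset (Function.update (fun _ => Finset.univ) i V) = Y then mi V else 0 := by
  rw [smets, Finset.sum_filter]
  exact Finset.sum_congr rfl fun V _ => by rw [smets_set_eq]

lemma vacExt_eq_ite (mA : Finset (Fin n) → ℝ) (Y : Finset (Fin n × Fin m)) :
    vacExt mA Y = ∑ U : Finset (Fin n),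
      if Tset (fun i => if i ∈ U then Finset.univ else ∅) = Y then mA U else 0 := by
  rw [vacExt, Finset.sum_filter]
  exact Finset.sum_congr rfl fun U _ => by rw [prod_univ_eq_Tset]

/-- the product-form mass function associated to a list of indices -/
noncomputable def pf (mBa : Fin n → Finset (Fin m) → ℝ) (l : List (Fin n)) :
    Finset (Fin n × Fin m) → ℝ := fun Y =>
  ∑ v : Fin n → Finset (Fin m),
    if Tset v = Y then
      (if ∀ i, i ∉ l → v i = Finset.univ then (l.map fun i => mBa i (v i)).prod else 0)
    else 0

lemma pf_nil (mBa : Fin n → Finset (Fin m) → ℝ) : pf mBa [] = vacuous (Fin n × Fin m) := by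
  funext Y
  rw [pf, Finset.sum_eq_single (fun _ : Fin n => (Finset.univ : Finset (Fin m)))]
  · simp [Tset_const_univ, vacuous, eq_comm]
  · intro v _ hv
    split_ifs with h1 h2
    · exact absurd (funext fun i => h2 i List.not_mem_nil) hv
    · rfl
    · rfl
  · intro h; exact absurd (Finset.mem_univ _) h

lemma meet_update {l : List (Fin n)} {i : Fin n} (hi : i ∉ l) {v : Fin n → Finset (Fin m)}
    (hc : ∀ k, k ∉ l → v k = Finset.univ) (V : Finset (Fin m)) :
    Tset v ∩ Tset (Function.update (fun _ => Finset.univ) i V) = Tset (Function.update v i V) := by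
  rw [Tset_inter]; congr 1; funext k
  by_cases hk : k = i
  · subst hk; simp [Function.update_self, hc k hi]
  · simp [Function.update_of_ne hk]

lemma pf_step (mBa : Fin n → Finset (Fin m) → ℝ) (hB : ∀ i, IsMass (mBa i))
    {l : List (Fin n)} {i : Fin n} (hi : i ∉ l) :
    dempster (pf mBa l) (smets i (mBa i)) = pf mBa (l ++ [i]) := by
  have key : ∀ Z : Finset (Fin n × Fin m),
      ∑ p ∈ Finset.univ.filter
          (fun p : Finset (Fin n × Fin m) × Finset (Fin n × Fin m) => p.1 ∩ p.2 = Z),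
        pf mBa l p.1 * smets i (mBa i) p.2
      = ∑ v : Fin n → Finset (Fin m), ∑ V : Finset (Fin m),
          if Tset v ∩ Tset (Function.update (fun _ => Finset.univ) i V) = Z then
            (if ∀ i', i' ∉ l → v i' = Finset.univ then (l.map fun k => mBa k (v k)).prod else 0)
              * mBa i V
          else 0 := by
    intro Z
    rw [← sum_pairs Tset (fun V => Tset (Function.update (fun _ => Finset.univ) i V))
      (fun v => if ∀ i', i' ∉ l → v i' = Finset.univ then (l.map fun k => mBa k (v k)).prod else 0)
      (mBa i) Z]
    exact Finset.sum_congr rfl fun p _ => by rw [smets_eq_ite]; rfl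
  have hconf : conflict (pf mBa l) (smets i (mBa i)) = 0 := by
    rw [conflict, key ∅]
    refine Finset.sum_eq_zero fun v _ => Finset.sum_eq_zero fun V _ => ?_
    split_ifs with h h2
    · have hV : V = ∅ := by
        rw [meet_update hi h2 V] at h
        have := Tset_eq_empty.mp h i
        simpa [Function.update_self] using this
      rw [hV, (hB i).1, mul_zero]
    · rw [zero_mul]
    · rfl
  funext Y
  by_cases hY : Y = ∅
  · subst hY
    rw [dempster, if_pos rfl]
    symm
    refine Finset.sum_eq_zero fun v _ => ?_
    split_ifs with h1 h2
    · have hvi : v i = ∅ := Tset_eq_empty.mp h1 i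
      rw [List.map_append, List.prod_append]
      simp [hvi, (hB i).1]
    · rfl
    · rfl
  · rw [dempster, if_neg hY, hconf, sub_zero, inv_one, one_mul, key Y]
    -- change of variables
    calc ∑ v : Fin n → Finset (Fin m), ∑ V : Finset (Fin m),
          (if Tset v ∩ Tset (Function.update (fun _ => Finset.univ) i V) = Y then
            (if ∀ i', i' ∉ l → v i' = Finset.univ then (l.map fun k => mBa k (v k)).prod else 0)
              * mBa i V
          else 0)
        = ∑ r : (Fin n → Finset (Fin m)) × Finset (Fin m),
            (if ((∀ i', i' ∉ l → r.1 i' = Finset.univ) ∧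
                Tset r.1 ∩ Tset (Function.update (fun _ => Finset.univ) i r.2) = Y) then
              (l.map fun k => mBa k (r.1 k)).prod * mBa i r.2 else 0) := by
          rw [Fintype.sum_prod_type]
          refine Finset.sum_congr rfl fun v _ => Finset.sum_congr rfl fun V _ => ?_
          by_cases h1 : (∀ i', i' ∉ l → v i' = Finset.univ) <;>
            by_cases h2 : Tset v ∩ Tset (Function.update (fun _ => Finset.univ) i V) = Y <;>
              simp [h1, h2]
      _ = ∑ r ∈ Finset.univ.filter
            (fun r : (Fin n → Finset (Fin m)) × Finset (Fin m) =>
              (∀ i', i' ∉ l → r.1 i' = Finset.univ) ∧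
                Tset r.1 ∩ Tset (Function.update (fun _ => Finset.univ) i r.2) = Y),
            (l.map fun k => mBa k (r.1 k)).prod * mBa i r.2 := (Finset.sum_filter _ _).symm
      _ = ∑ w ∈ Finset.univ.filter
            (fun w : Fin n → Finset (Fin m) =>
              (∀ i', i' ∉ l ++ [i] → w i' = Finset.univ) ∧ Tset w = Y),
            ((l ++ [i]).map fun k => mBa k (w k)).prod := by
          refine Finset.sum_nbij' (fun r => Function.update r.1 i r.2)
            (fun w => (Function.update w i Finset.univ, w i)) ?_ ?_ ?_ ?_ ?_
          · rintro ⟨v, V⟩ hr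
            rw [Finset.mem_filter] at hr ⊢
            obtain ⟨-, hc, hT⟩ := hr
            dsimp only at hc hT ⊢
            refine ⟨Finset.mem_univ _, fun k hk => ?_, ?_⟩
            · rw [List.mem_append, List.mem_singleton] at hk
              push_neg at hk
              rw [Function.update_of_ne hk.2]
              exact hc k hk.1
            · rw [← meet_update hi hc V]; exact hT
          · intro w hw
            rw [Finset.mem_filter] at hw ⊢
            obtain ⟨-, hc, hT⟩ := hw
            dsimp only
            have hc' : ∀ k, k ∉ l → Function.update w i Finset.univ k = Finset.univ := by
              intro k hk
              by_cases hki : k = i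
              · subst hki; rw [Function.update_self]
              · rw [Function.update_of_ne hki]
                refine hc k ?_
                rw [List.mem_append, List.mem_singleton]
                push_neg; exact ⟨hk, hki⟩
            refine ⟨Finset.mem_univ _, hc', ?_⟩
            rw [meet_update hi hc' (w i)]
            rw [show Function.update (Function.update w i Finset.univ) i (w i) = w from by
              rw [Function.update_idem, Function.update_eq_self]]
            exact hT
          · rintro ⟨v, V⟩ hr
            rw [Finset.mem_filter] at hr
            obtain ⟨-, hc, -⟩ := hr
            dsimp only at hc ⊢
            have hvi : v i = Finset.univ := hc i hi
            rw [Prod.ext_iff]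
            constructor
            · rw [Function.update_idem, ← hvi, Function.update_eq_self]
            · exact Function.update_self i V v
          · intro w hw
            dsimp only
            rw [Function.update_idem, Function.update_eq_self]
          · rintro ⟨v, V⟩ hr
            rw [Finset.mem_filter] at hr
            obtain ⟨-, hc, -⟩ := hr
            dsimp only at hc ⊢
            rw [List.map_append, List.prod_append]
            simp only [List.map_cons, List.map_nil, List.prod_cons, List.prod_nil, mul_one]
            rw [Function.update_self]
            congr 1
            refine congrArg List.prod (List.map_congr_left fun k hk => ?_)
            have : k ≠ i := fun h => hi (h ▸ hk)
            rw [Function.update_of_ne this]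
      _ = ∑ w : Fin n → Finset (Fin m),
            (if Tset w = Y then
              (if ∀ i', i' ∉ l ++ [i] → w i' = Finset.univ then
                ((l ++ [i]).map fun k => mBa k (w k)).prod else 0) else 0) := by
          rw [Finset.sum_filter]
          refine Finset.sum_congr rfl fun w _ => ?_
          by_cases h1 : (∀ i', i' ∉ l ++ [i] → w i' = Finset.univ) <;>
            by_cases h2 : Tset w = Y <;> simp [h1, h2]
      _ = pf mBa (l ++ [i]) Y := rfl

lemma pf_foldl (mBa : Fin n → Finset (Fin m) → ℝ) (hB : ∀ i, IsMass (mBa i)) :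
    ∀ (l acc : List (Fin n)), (acc ++ l).Nodup →
      List.foldl dempster (pf mBa acc) (l.map fun i => smets i (mBa i)) = pf mBa (acc ++ l) := by
  intro l
  induction l with
  | nil => intro acc _; simp
  | cons i t ih =>
    intro acc hnd
    have hi : i ∉ acc := fun h =>
      (List.disjoint_of_nodup_append hnd) h List.mem_cons_self
    rw [List.map_cons, List.foldl_cons, pf_step mBa hB hi]
    have hnd' : ((acc ++ [i]) ++ t).Nodup := by
      rwa [List.append_cons] at hnd
    have := ih (acc ++ [i]) hnd'
    rwa [List.append_assoc, List.singleton_append] at this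

lemma dempsterList_eq (mBa : Fin n → Finset (Fin m) → ℝ) (hB : ∀ i, IsMass (mBa i)) :
    dempsterList ((List.finRange n).map fun i => smets i (mBa i))
      = pf mBa (List.finRange n) := by
  rw [dempsterList, ← pf_nil mBa]
  have := pf_foldl mBa hB (List.finRange n) [] (by simpa using List.nodup_finRange n)
  simpa using this

lemma pf_finRange (mBa : Fin n → Finset (Fin m) → ℝ) (Y : Finset (Fin n × Fin m)) :
    pf mBa (List.finRange n) Y
      = ∑ v : Fin n → Finset (Fin m), if Tset v = Y then ∏ k, mBa k (v k) else 0 := by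
  rw [pf]
  refine Finset.sum_congr rfl fun v _ => ?_
  have hcond : ∀ i : Fin n, i ∉ List.finRange n → v i = Finset.univ :=
    fun i h => absurd (List.mem_finRange i) h
  by_cases hT : Tset v = Y
  · rw [if_pos hT, if_pos hT, if_pos hcond, Fin.prod_univ_def]
  · rw [if_neg hT, if_neg hT]

lemma mem_image_snd_iff {U : Finset (Fin n)} {v : Fin n → Finset (Fin m)} {j : Fin m} :
    (j ∈ (Tset (fun i => if i ∈ U then (Finset.univ : Finset (Fin m)) else ∅)
        ∩ Tset v).image Prod.snd) ↔ ∃ i ∈ U, j ∈ v i := by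
  simp only [Finset.mem_image, Finset.mem_inter, mem_Tset]
  constructor
  · rintro ⟨⟨i, j'⟩, ⟨h1, h2⟩, rfl⟩
    by_cases hi : i ∈ U
    · exact ⟨i, hi, h2⟩
    · rw [if_neg hi] at h1; exact absurd h1 (Finset.notMem_empty _)
  · rintro ⟨i, hi, hj⟩
    exact ⟨(i, j), ⟨by rw [if_pos hi]; exact Finset.mem_univ _, hj⟩, rfl⟩

end DSAux

open DSAux

/-- For a credal chain link `A → B` with mass function `mA` on
`E_A = Fin n` and conditional mass functions `mBa i` on `E_B = Fin m`, letting
`m_{B|A} = ⊗ᵢ m_{B|aᵢ}` (Dempster combination of the Smets embeddings),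
`m_{A,B} = mA^↑ ⊗ m_{B|A}` and `m_B = m_{A,B}^{↓E_B}`, the plausibility of each
singleton `{b_j}` under `m_B` equals
`1 - ∑_{V ⊆ E_A} mA(V) ∏_{i ∈ V} (1 - Pl_{mBa i}({b_j}))`. -/
theorem belief_inference_upper (n m : ℕ) (hn : 0 < n) (hm : 0 < m)
    (mA : Finset (Fin n) → ℝ) (hA : IsMass mA)
    (mBa : Fin n → Finset (Fin m) → ℝ) (hB : ∀ i, IsMass (mBa i))
    (mBA : Finset (Fin n × Fin m) → ℝ)
    (hBA : mBA = dempsterList ((List.finRange n).map fun i => smets i (mBa i)))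
    (mAB : Finset (Fin n × Fin m) → ℝ)
    (hAB : mAB = dempster (vacExt mA) mBA)
    (mB : Finset (Fin m) → ℝ) (hmB : mB = margSnd mAB) :
    ∀ j : Fin m,
      Pl mB {j} = 1 - ∑ V : Finset (Fin n), mA V * ∏ i ∈ V, (1 - Pl (mBa i) {j}) := by
  intro j
  have hmBA_ite : ∀ Y, mBA Y
      = ∑ v : Fin n → Finset (Fin m), if Tset v = Y then ∏ k, mBa k (v k) else 0 := by
    intro Y; rw [hBA, dempsterList_eq mBa hB, pf_finRange]
  have key2 : ∀ Z : Finset (Fin n × Fin m),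
      ∑ p ∈ Finset.univ.filter
          (fun p : Finset (Fin n × Fin m) × Finset (Fin n × Fin m) => p.1 ∩ p.2 = Z),
        vacExt mA p.1 * mBA p.2
      = ∑ U : Finset (Fin n), ∑ v : Fin n → Finset (Fin m),
          if Tset (fun i => if i ∈ U then Finset.univ else ∅) ∩ Tset v = Z then
            mA U * ∏ k, mBa k (v k) else 0 := by
    intro Z
    rw [← sum_pairs (fun U : Finset (Fin n) => Tset (fun i => if i ∈ U then Finset.univ else ∅))
      Tset mA (fun v => ∏ k, mBa k (v k)) Z]
    exact Finset.sum_congr rfl fun p _ => by rw [vacExt_eq_ite, hmBA_ite]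
  have hconf2 : conflict (vacExt mA) mBA = 0 := by
    rw [conflict, key2 ∅]
    refine Finset.sum_eq_zero fun U _ => Finset.sum_eq_zero fun v _ => ?_
    split_ifs with h
    · by_cases hU : U = ∅
      · rw [hU, hA.1, zero_mul]
      · obtain ⟨i, hiU⟩ := Finset.nonempty_iff_ne_empty.mpr hU
        rw [Tset_inter] at h
        have hvi : v i = ∅ := by
          have := Tset_eq_empty.mp h i
          rwa [if_pos hiU, Finset.univ_inter] at this
        rw [Finset.prod_eq_zero (Finset.mem_univ i) (by rw [hvi]; exact (hB i).1), mul_zero]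
    · rfl
  -- regroup the plausibility as a sum over joint focal sets
  have hregroup : Pl mB {j}
      = ∑ Y ∈ Finset.univ.filter
          (fun Y : Finset (Fin n × Fin m) => j ∈ Y.image Prod.snd), mAB Y := by
    rw [hmB, Pl]
    have := Finset.sum_fiberwise_eq_sum_filter (Finset.univ : Finset (Finset (Fin n × Fin m)))
      (Finset.univ.filter (fun W : Finset (Fin m) => (W ∩ {j}).Nonempty))
      (fun Y => Y.image Prod.snd) mAB
    rw [show (∑ W ∈ Finset.univ.filter (fun W : Finset (Fin m) => (W ∩ {j}).Nonempty),
        margSnd mAB W)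
      = ∑ W ∈ Finset.univ.filter (fun W : Finset (Fin m) => (W ∩ {j}).Nonempty),
          ∑ Y ∈ Finset.univ.filter
            (fun Y : Finset (Fin n × Fin m) => Y.image Prod.snd = W), mAB Y from rfl]
    rw [this]
    refine Finset.sum_congr (Finset.filter_congr fun Y _ => ?_) fun _ _ => rfl
    simp only [Finset.mem_filter, Finset.mem_univ, true_and]
    constructor
    · rintro ⟨x, hx⟩
      rw [Finset.mem_inter, Finset.mem_singleton] at hx
      exact hx.2 ▸ hx.1
    · intro hj
      exact ⟨j, Finset.mem_inter.mpr ⟨hj, Finset.mem_singleton_self j⟩⟩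
  have stepC : Pl mB {j}
      = ∑ U : Finset (Fin n), ∑ v : Fin n → Finset (Fin m),
          if (∃ i ∈ U, j ∈ v i) then mA U * ∏ k, mBa k (v k) else 0 := by
    rw [hregroup, Finset.sum_filter]
    calc ∑ Y : Finset (Fin n × Fin m), (if j ∈ Y.image Prod.snd then mAB Y else 0)
        = ∑ Y : Finset (Fin n × Fin m), ∑ U : Finset (Fin n), ∑ v : Fin n → Finset (Fin m),
            if Tset (fun i => if i ∈ U then Finset.univ else ∅) ∩ Tset v = Y then
              (if j ∈ Y.image Prod.snd then mA U * ∏ k, mBa k (v k) else 0) else 0 := by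
          refine Finset.sum_congr rfl fun Y _ => ?_
          by_cases hj : j ∈ Y.image Prod.snd
          · have hYne : Y ≠ ∅ := by rintro rfl; simp at hj
            rw [if_pos hj, hAB, dempster, if_neg hYne, hconf2, sub_zero, inv_one, one_mul,
              key2 Y]
            refine Finset.sum_congr rfl fun U _ => Finset.sum_congr rfl fun v _ => ?_
            simp only [hj, if_true]
          · rw [if_neg hj]
            symm
            refine Finset.sum_eq_zero fun U _ => Finset.sum_eq_zero fun v _ => ?_
            simp only [hj, if_false]
            split_ifs <;> rfl
      _ = ∑ U : Finset (Fin n), ∑ v : Fin n → Finset (Fin m), ∑ Y : Finset (Fin n × Fin m),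
            if Tset (fun i => if i ∈ U then Finset.univ else ∅) ∩ Tset v = Y then
              (if j ∈ Y.image Prod.snd then mA U * ∏ k, mBa k (v k) else 0) else 0 := by
          rw [Finset.sum_comm]
          exact Finset.sum_congr rfl fun U _ => Finset.sum_comm
      _ = ∑ U : Finset (Fin n), ∑ v : Fin n → Finset (Fin m),
            if (∃ i ∈ U, j ∈ v i) then mA U * ∏ k, mBa k (v k) else 0 := by
          refine Finset.sum_congr rfl fun U _ => Finset.sum_congr rfl fun v _ => ?_
          rw [Finset.sum_ite_eq, if_pos (Finset.mem_univ _)]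
          by_cases h : (∃ i ∈ U, j ∈ v i)
          · rw [if_pos (mem_image_snd_iff.mpr h), if_pos h]
          · rw [if_neg (fun hc => h (mem_image_snd_iff.mp hc)), if_neg h]
  -- total mass of the conditional part
  have hg : (∑ v : Fin n → Finset (Fin m), ∏ k, mBa k (v k)) = 1 := by
    rw [← Fintype.piFinset_univ, ← Finset.prod_univ_sum]
    exact Finset.prod_eq_one fun i _ => (hB i).2.2
  -- sum of masses avoiding j
  have hPl : ∀ i : Fin n,
      (∑ V ∈ Finset.univ.filter (fun V : Finset (Fin m) => j ∉ V), mBa i V)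
        = 1 - Pl (mBa i) {j} := by
    intro i
    have hPlj : Pl (mBa i) {j}
        = ∑ V ∈ Finset.univ.filter (fun V : Finset (Fin m) => j ∈ V), mBa i V := by
      rw [Pl]
      refine Finset.sum_congr (Finset.filter_congr fun V _ => ?_) fun _ _ => rfl
      constructor
      · rintro ⟨x, hx⟩
        rw [Finset.mem_inter, Finset.mem_singleton] at hx
        exact hx.2 ▸ hx.1
      · intro hj
        exact ⟨j, Finset.mem_inter.mpr ⟨hj, Finset.mem_singleton_self j⟩⟩
    have htot := Finset.sum_filter_add_sum_filter_not Finset.univ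
      (fun V : Finset (Fin m) => j ∈ V) (mBa i)
    rw [(hB i).2.2] at htot
    rw [hPlj]
    linarith
  have hcomp : ∀ U : Finset (Fin n),
      (∑ v : Fin n → Finset (Fin m),
        if (∀ i ∈ U, j ∉ v i) then ∏ k, mBa k (v k) else 0)
      = ∏ i ∈ U, (1 - Pl (mBa i) {j}) := by
    intro U
    rw [← Finset.sum_filter]
    have hfil : Finset.univ.filter (fun v : Fin n → Finset (Fin m) => ∀ i ∈ U, j ∉ v i)
        = Fintype.piFinset (fun i => if i ∈ U then
            Finset.univ.filter (fun V : Finset (Fin m) => j ∉ V) else Finset.univ) := by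
      ext v
      simp only [Finset.mem_filter, Finset.mem_univ, true_and, Fintype.mem_piFinset]
      constructor
      · intro h i
        by_cases hU : i ∈ U
        · rw [if_pos hU, Finset.mem_filter]
          exact ⟨Finset.mem_univ _, h i hU⟩
        · rw [if_neg hU]; exact Finset.mem_univ _
      · intro h i hU
        have := h i
        rw [if_pos hU, Finset.mem_filter] at this
        exact this.2
    rw [hfil, ← Finset.prod_univ_sum]
    rw [show (∏ i : Fin n, ∑ V ∈ (if i ∈ U then
        Finset.univ.filter (fun V : Finset (Fin m) => j ∉ V) else Finset.univ), mBa i V)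
      = ∏ i : Fin n, (if i ∈ U then (1 - Pl (mBa i) {j}) else 1) from
      Finset.prod_congr rfl fun i _ => by
        by_cases hU : i ∈ U
        · rw [if_pos hU, if_pos hU, hPl i]
        · rw [if_neg hU, if_neg hU]; exact (hB i).2.2]
    rw [Finset.prod_ite_mem, Finset.univ_inter]
  -- final assembly
  rw [stepC]
  have split : ∀ (U : Finset (Fin n)) (v : Fin n → Finset (Fin m)),
      (if (∃ i ∈ U, j ∈ v i) then mA U * ∏ k, mBa k (v k) else 0)
      = mA U * ∏ k, mBa k (v k)
        - (if (∀ i ∈ U, j ∉ v i) then mA U * ∏ k, mBa k (v k) else 0) := by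
    intro U v
    by_cases h : ∃ i ∈ U, j ∈ v i
    · rw [if_pos h, if_neg, sub_zero]
      push_neg
      obtain ⟨i, hi, hj⟩ := h
      exact ⟨i, hi, hj⟩
    · rw [if_neg h, if_pos, sub_self]
      push_neg at h
      exact h
  calc ∑ U : Finset (Fin n), ∑ v : Fin n → Finset (Fin m),
        (if (∃ i ∈ U, j ∈ v i) then mA U * ∏ k, mBa k (v k) else 0)
      = ∑ U : Finset (Fin n),
          (mA U * 1 - mA U * ∏ i ∈ U, (1 - Pl (mBa i) {j})) := by
        refine Finset.sum_congr rfl fun U _ => ?_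
        rw [Finset.sum_congr rfl (fun v _ => split U v), Finset.sum_sub_distrib]
        congr 1
        · rw [← Finset.mul_sum, hg]
        · rw [show (∑ v : Fin n → Finset (Fin m),
              if (∀ i ∈ U, j ∉ v i) then mA U * ∏ k, mBa k (v k) else 0)
            = mA U * ∑ v : Fin n → Finset (Fin m),
              (if (∀ i ∈ U, j ∉ v i) then ∏ k, mBa k (v k) else 0) from by
            rw [Finset.mul_sum]
            exact Finset.sum_congr rfl fun v _ => by split_ifs <;> simp]
          rw [hcomp U]
    _ = 1 - ∑ V : Finset (Fin n), mA V * ∏ i ∈ V, (1 - Pl (mBa i) {j}) := by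
        rw [Finset.sum_sub_distrib]
        simp only [mul_one]
        rw [hA.2.2]
end

section
/- Let E_A = {a_1,…,a_n} and E_B be finite sets and, for each i = 1,…,n, let m_{B,a_i} be a mass function on E_B with conditional embedding m_{B|a_i} on E_A×E_B. Then any two of the embeddings m_{B|a_i}, m_{B|a_h} (i ≠ h) have degree of conflict zero, the combination m_{B|A} = ⊗_{i=1}^n m_{B|a_i} is well defined, and for all sets T^1,…,T^n ⊆ E_B one has m_{B|A}(⋃_{i=1}^n ({a_i}×T^i)) = ∏_{i=1}^n m_{B,a_i}(T^i), while m_{B|A} assigns mass 0 to every subset of E_A×E_B not of this form. -/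
open Finset

section Aux

variable {n m : ℕ}

/-- Fiber of a subset of `Fin n × Fin m` over `i : Fin n`. -/
def fib (i : Fin n) (Y : Finset (Fin n × Fin m)) : Finset (Fin m) :=
  Finset.univ.filter fun b => (i, b) ∈ Y

lemma mem_fib {i : Fin n} {b : Fin m} {Y : Finset (Fin n × Fin m)} :
    b ∈ fib i Y ↔ (i, b) ∈ Y := by simp [fib]

lemma fib_ext {Y₁ Y₂ : Finset (Fin n × Fin m)} (h : ∀ i, fib i Y₁ = fib i Y₂) :
    Y₁ = Y₂ := by
  ext ⟨i, b⟩
  rw [← mem_fib, ← mem_fib, h i]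

lemma fib_inter (i : Fin n) (Y₁ Y₂ : Finset (Fin n × Fin m)) :
    fib i (Y₁ ∩ Y₂) = fib i Y₁ ∩ fib i Y₂ := by
  ext b; simp [mem_fib]

lemma fib_empty (i : Fin n) : fib i (∅ : Finset (Fin n × Fin m)) = ∅ := by
  ext b; simp [mem_fib]

lemma fib_univ (i : Fin n) : fib i (Finset.univ : Finset (Fin n × Fin m)) = Finset.univ := by
  ext b; simp [mem_fib]

/-- The Smets embedding support set. -/
def Ej (j : Fin n) (V : Finset (Fin m)) : Finset (Fin n × Fin m) :=
  ({j} ×ˢ V) ∪ ((Finset.univ \ {j}) ×ˢ (Finset.univ : Finset (Fin m)))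

lemma mem_Ej {j i : Fin n} {V : Finset (Fin m)} {b : Fin m} :
    (i, b) ∈ Ej j V ↔ (i = j → b ∈ V) := by
  by_cases h : i = j <;> simp [Ej, h]

lemma fib_Ej (j i : Fin n) (V : Finset (Fin m)) :
    fib i (Ej j V) = if i = j then V else Finset.univ := by
  ext b; by_cases h : i = j <;> simp [mem_fib, mem_Ej, h]

lemma smets_eq_sum (j : Fin n) (f : Finset (Fin m) → ℝ) (Y : Finset (Fin n × Fin m)) :
    smets j f Y = ∑ V ∈ Finset.univ.filter (fun V : Finset (Fin m) => Ej j V = Y), f V := rfl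

lemma smets_apply (j : Fin n) (f : Finset (Fin m) → ℝ) (Y : Finset (Fin n × Fin m)) :
    smets j f Y = if Y = Ej j (fib j Y) then f (fib j Y) else 0 := by
  rw [smets_eq_sum]
  split_ifs with hY
  · rw [show (Finset.univ.filter fun V : Finset (Fin m) => Ej j V = Y) = {fib j Y} from ?_]
    · rw [Finset.sum_singleton]
    · ext V
      simp only [Finset.mem_filter, Finset.mem_univ, true_and, Finset.mem_singleton]
      constructor
      · rintro rfl; rw [fib_Ej, if_pos rfl]
      · rintro rfl; exact hY.symm
  · apply Finset.sum_eq_zero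
    intro V hV
    simp only [Finset.mem_filter, Finset.mem_univ, true_and] at hV
    exact absurd (by rw [← hV, fib_Ej, if_pos rfl]) hY

noncomputable def Mg (g : Fin n → Finset (Fin m) → ℝ) : Finset (Fin n × Fin m) → ℝ :=
  fun Y => ∏ i, g i (fib i Y)

noncomputable def vacB : Finset (Fin m) → ℝ := fun V => if V = Finset.univ then 1 else 0

lemma vacB_empty (hm : 0 < m) : (vacB : Finset (Fin m) → ℝ) ∅ = 0 := by
  have : (∅ : Finset (Fin m)) ≠ Finset.univ := fun he => by
    have := he ▸ Finset.mem_univ (⟨0, hm⟩ : Fin m)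
    simp at this
  simp [vacB, this]

lemma Mg_vacB : (Mg fun _ : Fin n => (vacB : Finset (Fin m) → ℝ)) = vacuous (Fin n × Fin m) := by
  funext Y
  by_cases hY : Y = Finset.univ
  · subst hY
    simp [Mg, vacuous, vacB, fib_univ]
  · rw [show vacuous (Fin n × Fin m) Y = 0 from if_neg hY]
    obtain ⟨i, hi⟩ : ∃ i, fib i Y ≠ Finset.univ := by
      by_contra hA
      push_neg at hA
      exact hY (fib_ext fun i => by rw [hA, fib_univ])
    exact Finset.prod_eq_zero (Finset.mem_univ i) (if_neg hi)

lemma conflict_Mg_smets (g : Fin n → Finset (Fin m) → ℝ) (j : Fin n)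
    (hgj : g j = vacB) (f : Finset (Fin m) → ℝ) (hf0 : f ∅ = 0) :
    conflict (Mg g) (smets j f) = 0 := by
  apply Finset.sum_eq_zero
  rintro ⟨Y₁, Y₂⟩ hp
  simp only [Finset.mem_filter, Finset.mem_univ, true_and] at hp
  by_contra hcon
  have h1 : Mg g Y₁ ≠ 0 := left_ne_zero_of_mul hcon
  have h2 : smets j f Y₂ ≠ 0 := right_ne_zero_of_mul hcon
  rw [smets_apply] at h2
  split_ifs at h2 with hc
  · have hj1 : fib j Y₁ = Finset.univ := by
      have := Finset.prod_ne_zero_iff.mp h1 j (Finset.mem_univ j)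
      rw [hgj] at this
      by_contra hne
      exact this (if_neg hne)
    have hne : fib j Y₂ ≠ ∅ := fun he => h2 (by rw [he, hf0])
    have : fib j (Y₁ ∩ Y₂) = fib j Y₂ := by
      rw [fib_inter, hj1, Finset.univ_inter]
    rw [hp, fib_empty] at this
    exact hne this.symm
  · exact h2 rfl

lemma dempster_step (g : Fin n → Finset (Fin m) → ℝ) (_hg0 : ∀ i, g i ∅ = 0) (j : Fin n)
    (hgj : g j = vacB) (f : Finset (Fin m) → ℝ) (hf0 : f ∅ = 0) :
    dempster (Mg g) (smets j f) = Mg (Function.update g j f) := by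
  funext Y
  rw [show dempster (Mg g) (smets j f) Y
      = if Y = ∅ then 0 else (1 - conflict (Mg g) (smets j f))⁻¹ *
        ∑ p ∈ Finset.univ.filter
            (fun p : Finset (Fin n × Fin m) × Finset (Fin n × Fin m) => p.1 ∩ p.2 = Y),
          Mg g p.1 * smets j f p.2 from rfl]
  by_cases hY : Y = ∅
  · rw [if_pos hY, hY]
    symm
    exact Finset.prod_eq_zero (Finset.mem_univ j)
      (by rw [fib_empty, Function.update_self, hf0])
  · rw [if_neg hY, conflict_Mg_smets g j hgj f hf0]
    norm_num
    have hfibstar : ∀ i, fib i (Y ∪ ({j} ×ˢ (Finset.univ : Finset (Fin m))))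
        = if i = j then Finset.univ else fib i Y := by
      intro i
      ext b
      rcases eq_or_ne i j with rfl | h
      · simp [mem_fib]
      · simp [mem_fib, h, Ne.symm h]
    rw [Finset.sum_eq_single_of_mem
        ((Y ∪ ({j} ×ˢ (Finset.univ : Finset (Fin m)))), Ej j (fib j Y))]
    · -- value at the distinguished pair
      have h2 : smets j f (Ej j (fib j Y)) = f (fib j Y) := by
        rw [smets_apply, fib_Ej, if_pos rfl, if_pos rfl]
      rw [h2]
      have hL : Mg g (Y ∪ ({j} ×ˢ (Finset.univ : Finset (Fin m))))
          = ∏ i, Function.update (fun i => g i (fib i Y)) j (1 : ℝ) i := by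
        refine Finset.prod_congr rfl fun i _ => ?_
        rcases eq_or_ne i j with rfl | hij
        · rw [hfibstar, if_pos rfl, Function.update_self, hgj]
          simp [vacB]
        · rw [hfibstar, if_neg hij, Function.update_of_ne hij]
      have hR : Mg (Function.update g j f) Y
          = ∏ i, Function.update (fun i => g i (fib i Y)) j (f (fib j Y)) i := by
        refine Finset.prod_congr rfl fun i _ => ?_
        rcases eq_or_ne i j with rfl | hij
        · rw [Function.update_self, Function.update_self]
        · rw [Function.update_of_ne hij, Function.update_of_ne hij]
      rw [hL, hR, Finset.prod_update_of_mem (Finset.mem_univ j),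
        Finset.prod_update_of_mem (Finset.mem_univ j)]
      ring
    · -- membership
      simp only [Finset.mem_filter, Finset.mem_univ, true_and]
      apply fib_ext
      intro i
      rw [fib_inter, hfibstar, fib_Ej]
      rcases eq_or_ne i j with rfl | hij
      · rw [if_pos rfl, if_pos rfl, Finset.univ_inter]
      · rw [if_neg hij, if_neg hij, Finset.inter_univ]
    · -- all other terms vanish
      rintro ⟨Z₁, Z₂⟩ hp hne
      simp only [Finset.mem_filter, Finset.mem_univ, true_and] at hp
      by_contra hcon
      have h1 : Mg g Z₁ ≠ 0 := left_ne_zero_of_mul hcon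
      have h2 : smets j f Z₂ ≠ 0 := right_ne_zero_of_mul hcon
      rw [smets_apply] at h2
      have hc : Z₂ = Ej j (fib j Z₂) := by
        by_contra hc
        rw [if_neg hc] at h2
        exact h2 rfl
      have hj1 : fib j Z₁ = Finset.univ := by
        have := Finset.prod_ne_zero_iff.mp h1 j (Finset.mem_univ j)
        rw [hgj] at this
        by_contra hne'
        exact this (if_neg hne')
      have hfibZ2 : ∀ i, fib i Z₂ = if i = j then fib j Z₂ else Finset.univ := by
        intro i
        conv_lhs => rw [hc]
        rw [fib_Ej]
      have hfibY : ∀ i, fib i Z₁ ∩ fib i Z₂ = fib i Y := fun i => by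
        rw [← fib_inter, hp]
      have hj2 : fib j Z₂ = fib j Y := by
        have := hfibY j
        rwa [hj1, Finset.univ_inter] at this
      apply hne
      have hZ1 : Z₁ = Y ∪ ({j} ×ˢ (Finset.univ : Finset (Fin m))) := by
        apply fib_ext
        intro i
        rw [hfibstar]
        rcases eq_or_ne i j with rfl | hij
        · rw [if_pos rfl, hj1]
        · rw [if_neg hij]
          have := hfibY i
          rwa [hfibZ2, if_neg hij, Finset.inter_univ] at this
      have hZ2 : Z₂ = Ej j (fib j Y) := by rw [hc, hj2]
      exact Prod.ext hZ1 hZ2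
lemma conflict_smets {i h : Fin n} (mi mh : Finset (Fin m) → ℝ)
    (hmi : mi ∅ = 0) (hih : i ≠ h) :
    conflict (smets i mi) (smets h mh) = (0 : ℝ) := by
  apply Finset.sum_eq_zero
  rintro ⟨Y₁, Y₂⟩ hp
  simp only [Finset.mem_filter, Finset.mem_univ, true_and] at hp
  by_contra hcon
  have h1 : smets i mi Y₁ ≠ 0 := left_ne_zero_of_mul hcon
  have h2 : smets h mh Y₂ ≠ 0 := right_ne_zero_of_mul hcon
  rw [smets_apply] at h1 h2
  split_ifs at h1 with hc1
  · split_ifs at h2 with hc2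
    · have hne : fib i Y₁ ≠ ∅ := fun he => h1 (by rw [he, hmi])
      have : fib i (Y₁ ∩ Y₂) = fib i Y₁ := by
        rw [fib_inter]
        conv_lhs => rw [hc2]
        rw [fib_Ej, if_neg hih, Finset.inter_univ]
      rw [hp, fib_empty] at this
      exact hne this.symm
    · exact h2 rfl
  · exact h1 rfl

lemma fold_eq (mBa : Fin n → Finset (Fin m) → ℝ) (hB : ∀ i, IsMass (mBa i)) :
    ∀ (L : List (Fin n)) (g : Fin n → Finset (Fin m) → ℝ),
      L.Nodup → (∀ i, g i ∅ = 0) → (∀ j ∈ L, g j = vacB) →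
      List.foldl dempster (Mg g) (L.map fun i => smets i (mBa i))
        = Mg fun i => if i ∈ L then mBa i else g i := by
  intro L
  induction L with
  | nil =>
    intro g _ _ _
    simp only [List.map_nil, List.foldl_nil, List.not_mem_nil, if_false]
  | cons j L ih =>
    intro g hnd hg0 hgv
    have hjL : j ∉ L := (List.nodup_cons.mp hnd).1
    simp only [List.map_cons, List.foldl_cons]
    rw [dempster_step g hg0 j (hgv j List.mem_cons_self) (mBa j) (hB j).1]
    rw [ih (Function.update g j (mBa j)) (List.nodup_cons.mp hnd).2
      (fun i => by
        rcases eq_or_ne i j with rfl | hij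
        · rw [Function.update_self]; exact (hB i).1
        · rw [Function.update_of_ne hij]; exact hg0 i)
      (fun j' hj' => by
        have hne : j' ≠ j := fun e => hjL (e ▸ hj')
        rw [Function.update_of_ne hne]
        exact hgv j' (List.mem_cons_of_mem _ hj'))]
    refine congrArg Mg (funext fun i => ?_)
    rcases eq_or_ne i j with rfl | hij
    · simp [hjL, Function.update_self]
    · simp [List.mem_cons, hij, Function.update_of_ne hij]

/-- Subsets of `Fin n × Fin m` are equivalent to fiber functions. -/
def fibEquiv (n m : ℕ) : Finset (Fin n × Fin m) ≃ (Fin n → Finset (Fin m)) where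
  toFun Y := fun i => fib i Y
  invFun T := Finset.univ.filter fun p => p.2 ∈ T p.1
  left_inv Y := by ext ⟨i, b⟩; simp [mem_fib]
  right_inv T := by funext i; ext b; simp [mem_fib]

lemma sum_Mg (g : Fin n → Finset (Fin m) → ℝ) :
    ∑ Y : Finset (Fin n × Fin m), Mg g Y = ∏ i, ∑ V : Finset (Fin m), g i V := by
  rw [Finset.prod_univ_sum]
  rw [Fintype.piFinset_univ]
  exact Fintype.sum_equiv (fibEquiv n m) _ _ (fun Y => rfl)

lemma fib_biUnion (T : Fin n → Finset (Fin m)) (i : Fin n) :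
    fib i (Finset.univ.biUnion fun j => {j} ×ˢ T j) = T i := by
  ext b; simp [mem_fib]
end Aux

/-- The Smets conditional embeddings `m_{B|aᵢ}` are pairwise
conflict-free, their Dempster combination `m_{B|A} = ⊗ᵢ m_{B|aᵢ}` is a well-defined
mass function, it assigns mass `∏ᵢ mBa i (Tⁱ)` to each set `⋃ᵢ {aᵢ} × Tⁱ`, and
mass `0` to every subset of `E_A × E_B` not of this form. -/
theorem smets_embedding_combination (n m : ℕ) (hn : 0 < n) (hm : 0 < m)
    (mBa : Fin n → Finset (Fin m) → ℝ) (hB : ∀ i, IsMass (mBa i))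
    (mBA : Finset (Fin n × Fin m) → ℝ)
    (hBA : mBA = dempsterList ((List.finRange n).map fun i => smets i (mBa i))) :
    (∀ i h : Fin n, i ≠ h → conflict (smets i (mBa i)) (smets h (mBa h)) = 0) ∧
    IsMass mBA ∧
    (∀ T : Fin n → Finset (Fin m),
        mBA (Finset.univ.biUnion fun i => {i} ×ˢ T i) = ∏ i, mBa i (T i)) ∧
    (∀ Y : Finset (Fin n × Fin m),
        (¬ ∃ T : Fin n → Finset (Fin m),
            Y = Finset.univ.biUnion fun i => {i} ×ˢ T i) →
        mBA Y = 0) := by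
  have hM : mBA = Mg mBa := by
    rw [hBA]
    unfold dempsterList
    rw [← Mg_vacB (n := n) (m := m)]
    rw [fold_eq mBa hB (List.finRange n) (fun _ => vacB) (List.nodup_finRange n)
      (fun _ => vacB_empty hm) (fun _ _ => rfl)]
    refine congrArg Mg (funext fun i => ?_)
    simp [List.mem_finRange]
  refine ⟨fun i h hih => conflict_smets (mBa i) (mBa h) (hB i).1 hih, ?_, ?_, ?_⟩
  · refine ⟨?_, ?_, ?_⟩
    · rw [hM]
      exact Finset.prod_eq_zero (Finset.mem_univ (⟨0, hn⟩ : Fin n))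
        (by rw [fib_empty]; exact (hB _).1)
    · intro Y
      rw [hM]
      exact ⟨Finset.prod_nonneg fun i _ => ((hB i).2.1 _).1,
        Finset.prod_le_one (fun i _ => ((hB i).2.1 _).1) (fun i _ => ((hB i).2.1 _).2)⟩
    · rw [hM, sum_Mg, Finset.prod_congr rfl fun i _ => (hB i).2.2]
      simp
  · intro T
    rw [hM]
    exact Finset.prod_congr rfl fun i _ => by rw [fib_biUnion]
  · intro Y hY
    exact absurd ⟨fun i => fib i Y,
      fib_ext fun i => (fib_biUnion (fun i => fib i Y) i).symm⟩ hY
end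

section
/- Let E_A = {a_1,…,a_n} and E_B be finite sets, let m_A be a mass function on E_A and, for each i, let m_{B,a_i} be a mass function on E_B with conditional embedding m_{B|a_i}; set m_{B|A} = ⊗_{i=1}^n m_{B|a_i} and m_{A,B} = m_A^↑ ⊗ m_{B|A}, where m_A^↑ is the vacuous extension of m_A to E_A×E_B. Then the degree of conflict between m_A^↑ and m_{B|A} is zero, and for every V ⊆ E_A and every choice of nonempty sets T^i ⊆ E_B (i with a_i ∈ V) one has m_{A,B}(⋃_{i : a_i ∈ V} ({a_i}×T^i)) = m_A(V) · ∏_{i : a_i ∈ V} m_{B,a_i}(T^i), while all subsets of E_A×E_B not of this form receive mass 0 from m_{A,B}. -/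
set_option maxHeartbeats 1000000


open Finset

section Aux
open Finset

variable {n m : ℕ}

/-- Intersection of smets focal sets for indices in `s`. -/
def Cs (s : Finset (Fin n)) (T : Fin n → Finset (Fin m)) : Finset (Fin n × Fin m) :=
  Finset.univ.filter (fun p => p.1 ∈ s → p.2 ∈ T p.1)

/-- The smets focal set. -/
def Fi (i : Fin n) (V : Finset (Fin m)) : Finset (Fin n × Fin m) :=
  ({i} ×ˢ V) ∪ ((Finset.univ \ {i}) ×ˢ (Finset.univ : Finset (Fin m)))

def gf (mBa : Fin n → Finset (Fin m) → ℝ) (s : Finset (Fin n))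
    (T : Fin n → Finset (Fin m)) : ℝ :=
  if ∀ i ∉ s, T i = Finset.univ then ∏ i ∈ s, mBa i (T i) else 0

def GG (mBa : Fin n → Finset (Fin m) → ℝ) (s : Finset (Fin n))
    (Y : Finset (Fin n × Fin m)) : ℝ :=
  ∑ T ∈ Finset.univ.filter (fun T => Cs s T = Y), gf mBa s T

lemma mem_Cs {s : Finset (Fin n)} {T : Fin n → Finset (Fin m)} {p : Fin n × Fin m} :
    p ∈ Cs s T ↔ (p.1 ∈ s → p.2 ∈ T p.1) := by simp [Cs]

lemma mem_Fi {i : Fin n} {V : Finset (Fin m)} {p : Fin n × Fin m} :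
    p ∈ Fi i V ↔ (p.1 = i → p.2 ∈ V) := by
  obtain ⟨a, b⟩ := p
  by_cases h : a = i <;> simp [Fi, h, Prod.ext_iff, eq_comm]

lemma Cs_inter_Fi {s : Finset (Fin n)} {i : Fin n} (hi : i ∉ s)
    (T : Fin n → Finset (Fin m)) (V : Finset (Fin m)) :
    Cs s T ∩ Fi i V = Cs (insert i s) (Function.update T i V) := by
  ext p
  simp only [mem_inter, mem_Cs, mem_Fi, mem_insert]
  constructor
  · rintro ⟨h1, h2⟩ h3
    rcases h3 with h3 | h3
    · rw [h3, Function.update_self]; exact h2 h3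
    · have hne : p.1 ≠ i := fun hc => hi (hc ▸ h3)
      rw [Function.update_of_ne hne]; exact h1 h3
  · intro h
    constructor
    · intro hs
      have hne : p.1 ≠ i := fun hc => hi (hc ▸ hs)
      have := h (Or.inr hs); rwa [Function.update_of_ne hne] at this
    · intro he
      have := h (Or.inl he); rwa [he, Function.update_self] at this

lemma Cs_empty (hm : 0 < m) {s : Finset (Fin n)} {T : Fin n → Finset (Fin m)}
    (h : Cs s T = ∅) : ∀ j, j ∈ s ∧ T j = ∅ := by
  intro j
  by_cases hj : j ∈ s
  · refine ⟨hj, ?_⟩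
    by_contra hne
    obtain ⟨b, hb⟩ := Finset.nonempty_iff_ne_empty.mpr hne
    have : (j, b) ∈ Cs s T := mem_Cs.mpr (fun _ => hb)
    simp [h] at this
  · exfalso
    have : (j, ⟨0, hm⟩) ∈ Cs s T := mem_Cs.mpr (fun hc => absurd hc hj)
    simp [h] at this

lemma prodU_inter_Cs (V : Finset (Fin n)) (T : Fin n → Finset (Fin m)) :
    (V ×ˢ (Finset.univ : Finset (Fin m))) ∩ Cs Finset.univ T
      = Finset.univ.filter (fun p => p.1 ∈ V ∧ p.2 ∈ T p.1) := by
  ext p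
  simp [mem_Cs, and_comm]

lemma biUnion_eq_filter (V : Finset (Fin n)) (T : Fin n → Finset (Fin m)) :
    (V.biUnion fun i => {i} ×ˢ T i)
      = Finset.univ.filter (fun p => p.1 ∈ V ∧ p.2 ∈ T p.1) := by
  ext p
  simp only [mem_biUnion, mem_filter, mem_univ, true_and, mem_product, mem_singleton]
  constructor
  · rintro ⟨i, hi, h1, h2⟩; exact ⟨h1 ▸ hi, h1 ▸ h2⟩
  · rintro ⟨h1, h2⟩; exact ⟨p.1, h1, rfl, h2⟩

lemma GG_empty (hn : 0 < n) (hm : 0 < m) (mBa : Fin n → Finset (Fin m) → ℝ)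
    (hB0 : ∀ i, mBa i ∅ = 0) (s : Finset (Fin n)) : GG mBa s ∅ = 0 := by
  refine Finset.sum_eq_zero fun T hT => ?_
  simp only [mem_filter, mem_univ, true_and] at hT
  obtain ⟨hi0, hT0⟩ := Cs_empty hm hT ⟨0, hn⟩
  unfold gf
  split_ifs with h
  · exact Finset.prod_eq_zero hi0 (by rw [hT0]; exact hB0 _)
  · rfl

lemma pair_sum {α : Type*} [Fintype α] [DecidableEq α]
    {ι κ : Type*} [Fintype ι] [DecidableEq ι] [Fintype κ] [DecidableEq κ]
    (F : ι → Finset α) (G : κ → Finset α) (f : ι → ℝ) (g : κ → ℝ)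
    (P : Finset α × Finset α → Prop) [DecidablePred P] :
    ∑ p ∈ Finset.univ.filter P,
        (∑ x ∈ Finset.univ.filter (fun x => F x = p.1), f x) *
        (∑ y ∈ Finset.univ.filter (fun y => G y = p.2), g y)
      = ∑ q ∈ (Finset.univ : Finset (ι × κ)).filter (fun q => P (F q.1, G q.2)),
          f q.1 * g q.2 := by
  classical
  rw [← Finset.sum_fiberwise_of_maps_to
    (g := fun q : ι × κ => (F q.1, G q.2)) (t := Finset.univ.filter P)
    (by intro q hq; simp only [mem_filter, mem_univ, true_and] at hq ⊢; exact hq)]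
  refine Finset.sum_congr rfl fun p hp => ?_
  simp only [mem_filter, mem_univ, true_and] at hp
  have hset : ((Finset.univ.filter fun q : ι × κ => P (F q.1, G q.2)).filter
      (fun q => (F q.1, G q.2) = p))
      = (Finset.univ.filter fun x => F x = p.1) ×ˢ (Finset.univ.filter fun y => G y = p.2) := by
    rw [← Finset.filter_product]
    ext q
    simp only [Finset.mem_filter, Finset.mem_univ, true_and, Finset.filter_filter,
      Finset.mem_product, Prod.ext_iff]
    constructor
    · rintro ⟨_, h1, h2⟩; exact ⟨h1, h2⟩
    · rintro ⟨h1, h2⟩; exact ⟨by rw [h1, h2]; exact hp, h1, h2⟩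
  rw [Finset.sum_mul_sum, hset, Finset.sum_product]

lemma smets_eq (i : Fin n) (mi : Finset (Fin m) → ℝ) (Y : Finset (Fin n × Fin m)) :
    smets i mi Y = ∑ V ∈ Finset.univ.filter (fun V => Fi i V = Y), mi V := rfl

lemma step (hn : 0 < n) (hm : 0 < m) (mBa : Fin n → Finset (Fin m) → ℝ)
    (hB0 : ∀ i, mBa i ∅ = 0) (s : Finset (Fin n)) (i : Fin n) (hi : i ∉ s)
    (M : Finset (Fin n × Fin m) → ℝ) (hM : ∀ Y, M Y = GG mBa s Y) :
    conflict M (smets i (mBa i)) = 0 ∧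
      ∀ Y, dempster M (smets i (mBa i)) Y = GG mBa (insert i s) Y := by
  classical
  have hconv : ∀ (P : Finset (Fin n × Fin m) × Finset (Fin n × Fin m) → Prop)
      [DecidablePred P],
      ∑ p ∈ Finset.univ.filter P, M p.1 * smets i (mBa i) p.2
        = ∑ q ∈ (Finset.univ : Finset ((Fin n → Finset (Fin m)) × Finset (Fin m))).filter
            (fun q => P (Cs s q.1, Fi i q.2)), gf mBa s q.1 * mBa i q.2 := by
    intro P _
    rw [← pair_sum (Cs s) (Fi i) (gf mBa s) (mBa i) P]
    refine Finset.sum_congr rfl fun p _ => ?_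
    rw [hM, smets_eq]; rfl
  have hconf : conflict M (smets i (mBa i)) = 0 := by
    rw [show conflict M (smets i (mBa i))
        = ∑ p ∈ Finset.univ.filter
            (fun p : Finset (Fin n × Fin m) × Finset (Fin n × Fin m) => p.1 ∩ p.2 = ∅),
            M p.1 * smets i (mBa i) p.2 from rfl,
      hconv]
    refine Finset.sum_eq_zero fun q hq => ?_
    simp only [mem_filter, mem_univ, true_and] at hq
    rw [Cs_inter_Fi hi] at hq
    have h2 := (Cs_empty hm hq i).2
    rw [Function.update_self] at h2
    rw [h2, hB0, mul_zero]
  refine ⟨hconf, fun Y => ?_⟩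
  by_cases hY : Y = ∅
  · rw [hY]
    rw [show dempster M (smets i (mBa i)) ∅ = 0 from if_pos rfl]
    exact (GG_empty hn hm mBa hB0 _).symm
  · rw [show dempster M (smets i (mBa i)) Y
        = (1 - conflict M (smets i (mBa i)))⁻¹ *
          ∑ p ∈ Finset.univ.filter
            (fun p : Finset (Fin n × Fin m) × Finset (Fin n × Fin m) => p.1 ∩ p.2 = Y),
            M p.1 * smets i (mBa i) p.2 from if_neg hY,
      hconf, hconv]
    norm_num
    -- now: ∑ q ∈ filter (Cs s q.1 ∩ Fi i q.2 = Y), gf s q.1 * mBa i q.2 = GG (insert i s) Y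
    unfold GG gf
    rw [Finset.sum_filter, Finset.sum_filter]
    have lhs_eq : ∀ q : (Fin n → Finset (Fin m)) × Finset (Fin m),
        (if Cs s q.1 ∩ Fi i q.2 = Y then
          (if ∀ j ∉ s, q.1 j = Finset.univ then ∏ j ∈ s, mBa j (q.1 j) else 0) * mBa i q.2
         else 0)
        = (if (Cs s q.1 ∩ Fi i q.2 = Y ∧ ∀ j ∉ s, q.1 j = Finset.univ) then
            (∏ j ∈ s, mBa j (q.1 j)) * mBa i q.2 else 0) := by
      intro q; split_ifs <;> simp_all
    have rhs_eq : ∀ T : Fin n → Finset (Fin m),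
        (if Cs (insert i s) T = Y then
          (if ∀ j ∉ insert i s, T j = Finset.univ then ∏ j ∈ insert i s, mBa j (T j) else 0)
         else 0)
        = (if (Cs (insert i s) T = Y ∧ ∀ j ∉ insert i s, T j = Finset.univ) then
            ∏ j ∈ insert i s, mBa j (T j) else 0) := by
      intro T; split_ifs <;> simp_all
    simp only [lhs_eq, rhs_eq]
    rw [← Finset.sum_filter, ← Finset.sum_filter]
    refine Finset.sum_nbij' (fun q => Function.update q.1 i q.2)
      (fun T => (Function.update T i Finset.univ, T i)) ?_ ?_ ?_ ?_ ?_
    · intro q hq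
      simp only [mem_filter, mem_univ, true_and] at hq ⊢
      obtain ⟨h1, h2⟩ := hq
      refine ⟨by rw [← Cs_inter_Fi hi]; exact h1, fun j hj => ?_⟩
      have hji : j ≠ i := fun hc => hj (hc ▸ mem_insert_self i s)
      rw [Function.update_of_ne hji]
      exact h2 j (fun hc => hj (mem_insert_of_mem hc))
    · intro T hT
      simp only [mem_filter, mem_univ, true_and] at hT ⊢
      obtain ⟨h1, h2⟩ := hT
      constructor
      · rw [Cs_inter_Fi hi, Function.update_idem, Function.update_eq_self]
        exact h1
      · intro j hj
        by_cases hji : j = i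
        · rw [hji, Function.update_self]
        · rw [Function.update_of_ne hji]
          exact h2 j (by simp [hji, hj])
    · intro q hq
      simp only [mem_filter, mem_univ, true_and] at hq
      have hTi : q.1 i = Finset.univ := hq.2 i hi
      ext1
      · simp only [Function.update_idem, Function.update_self]
        rw [← hTi, Function.update_eq_self]
      · simp only [Function.update_self]
    · intro T hT
      show Function.update (Function.update T i Finset.univ) i (T i) = T
      rw [Function.update_idem, Function.update_eq_self]
    · intro q hq
      simp only [mem_filter, mem_univ, true_and] at hq
      show (∏ j ∈ s, mBa j (q.1 j)) * mBa i q.2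
          = ∏ j ∈ insert i s, mBa j (Function.update q.1 i q.2 j)
      rw [Finset.prod_insert hi, Function.update_self, mul_comm]
      congr 1
      refine Finset.prod_congr rfl fun j hj => ?_
      exact Function.update_of_ne (fun hc : j = i => hi (hc ▸ hj)) _ _ ▸ rfl

lemma GG_vac (mBa : Fin n → Finset (Fin m) → ℝ) (Y : Finset (Fin n × Fin m)) :
    vacuous (Fin n × Fin m) Y = GG mBa ∅ Y := by
  classical
  have hC : ∀ T : Fin n → Finset (Fin m), Cs (∅ : Finset (Fin n)) T = Finset.univ := by
    intro T; ext p; simp [mem_Cs]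
  unfold vacuous GG gf
  by_cases hY : Y = (Finset.univ : Finset (Fin n × Fin m))
  · subst hY
    rw [if_pos rfl]
    have hfil : (Finset.univ.filter
        (fun T : Fin n → Finset (Fin m) => Cs ∅ T = Finset.univ)) = Finset.univ :=
      Finset.filter_true_of_mem fun T _ => hC T
    rw [hfil]
    have hpt : ∀ T : Fin n → Finset (Fin m),
        (if ∀ i ∉ (∅ : Finset (Fin n)), T i = Finset.univ
          then ∏ i ∈ (∅ : Finset (Fin n)), mBa i (T i) else 0)
        = if T = (fun _ => Finset.univ) then (1 : ℝ) else 0 := by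
      intro T
      simp [funext_iff]
    rw [Finset.sum_congr rfl fun T _ => hpt T, Finset.sum_ite_eq' Finset.univ
      (fun _ => (Finset.univ : Finset (Fin m))) (fun _ => (1 : ℝ)), if_pos (Finset.mem_univ _)]
  · rw [if_neg hY]
    symm
    refine Finset.sum_eq_zero fun T hT => ?_
    simp only [Finset.mem_filter, Finset.mem_univ, true_and] at hT
    exact absurd ((hC T).symm.trans hT).symm hY

lemma foldl_G (hn : 0 < n) (hm : 0 < m) (mBa : Fin n → Finset (Fin m) → ℝ)
    (hB0 : ∀ i, mBa i ∅ = 0) :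
    ∀ (l : List (Fin n)) (s : Finset (Fin n)) (M : Finset (Fin n × Fin m) → ℝ),
      (∀ i ∈ l, i ∉ s) → l.Nodup → (∀ Y, M Y = GG mBa s Y) →
      ∀ Y, ((l.map fun i => smets i (mBa i)).foldl dempster M) Y
        = GG mBa (s ∪ l.toFinset) Y := by
  intro l
  induction l with
  | nil => intro s M _ _ hM Y; simpa using hM Y
  | cons i l ih =>
    intro s M hdisj hnd hM Y
    have hi : i ∉ s := hdisj i List.mem_cons_self
    have hstep := step hn hm mBa hB0 s i hi M hM
    have hrec := ih (insert i s) (dempster M (smets i (mBa i)))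
      (fun j hj hmem => by
        rcases Finset.mem_insert.mp hmem with h | h
        · exact (List.nodup_cons.mp hnd).1 (h ▸ hj)
        · exact hdisj j (List.mem_cons_of_mem i hj) h)
      (List.nodup_cons.mp hnd).2 hstep.2 Y
    simp only [List.map_cons, List.foldl_cons]
    rw [hrec]
    congr 1
    ext j
    simp only [Finset.mem_union, Finset.mem_insert, List.toFinset_cons, List.mem_toFinset]
    tauto

end Aux

/-- The vacuous extension `mA^↑` and `m_{B|A} = ⊗ᵢ m_{B|aᵢ}` have
degree of conflict zero, and the global model `m_{A,B} = mA^↑ ⊗ m_{B|A}` assigns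
mass `mA(V) ∏_{i ∈ V} mBa i (Tⁱ)` to each set `⋃_{i ∈ V} {aᵢ} × Tⁱ` (with all `Tⁱ`,
`i ∈ V`, nonempty), and mass `0` to every subset of `E_A × E_B` not of this form. -/
theorem global_model_focal_sets (n m : ℕ) (hn : 0 < n) (hm : 0 < m)
    (mA : Finset (Fin n) → ℝ) (hA : IsMass mA)
    (mBa : Fin n → Finset (Fin m) → ℝ) (hB : ∀ i, IsMass (mBa i))
    (mBA : Finset (Fin n × Fin m) → ℝ)
    (hBA : mBA = dempsterList ((List.finRange n).map fun i => smets i (mBa i)))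
    (mAB : Finset (Fin n × Fin m) → ℝ)
    (hAB : mAB = dempster (vacExt mA) mBA) :
    conflict (vacExt mA) mBA = 0 ∧
    (∀ (V : Finset (Fin n)) (T : Fin n → Finset (Fin m)),
        (∀ i ∈ V, (T i).Nonempty) →
        mAB (V.biUnion fun i => {i} ×ˢ T i) = mA V * ∏ i ∈ V, mBa i (T i)) ∧
    (∀ Y : Finset (Fin n × Fin m),
        (¬ ∃ (V : Finset (Fin n)) (T : Fin n → Finset (Fin m)),
            (∀ i ∈ V, (T i).Nonempty) ∧ Y = V.biUnion fun i => {i} ×ˢ T i) →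
        mAB Y = 0) := by
  classical
  have hB0 : ∀ i, mBa i ∅ = 0 := fun i => (hB i).1
  have hmBA : ∀ Y, mBA Y = GG mBa Finset.univ Y := by
    intro Y
    rw [hBA]
    unfold dempsterList
    rw [foldl_G hn hm mBa hB0 (List.finRange n) ∅ (vacuous (Fin n × Fin m))
      (fun i _ => Finset.notMem_empty i) (List.nodup_finRange n)
      (fun Y => GG_vac mBa Y) Y]
    congr 1
    ext j
    simp
  have gf_univ : ∀ T : Fin n → Finset (Fin m),
      gf mBa Finset.univ T = ∏ j, mBa j (T j) :=
    fun T => if_pos (fun j hj => absurd (Finset.mem_univ j) hj)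
  have hconv : ∀ (P : Finset (Fin n × Fin m) × Finset (Fin n × Fin m) → Prop)
      [DecidablePred P],
      ∑ p ∈ Finset.univ.filter P, vacExt (β := Fin m) mA p.1 * mBA p.2
        = ∑ q ∈ (Finset.univ :
            Finset (Finset (Fin n) × (Fin n → Finset (Fin m)))).filter
            (fun q => P (q.1 ×ˢ Finset.univ, Cs Finset.univ q.2)),
            mA q.1 * gf mBa Finset.univ q.2 := by
    intro P _
    rw [← pair_sum (fun V : Finset (Fin n) => V ×ˢ (Finset.univ : Finset (Fin m)))
      (Cs Finset.univ) mA (gf mBa Finset.univ) P]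
    refine Finset.sum_congr rfl fun p _ => ?_
    rw [hmBA]; rfl
  have key1 : conflict (vacExt mA) mBA = 0 := by
    rw [show conflict (vacExt mA) mBA
        = ∑ p ∈ Finset.univ.filter
            (fun p : Finset (Fin n × Fin m) × Finset (Fin n × Fin m) => p.1 ∩ p.2 = ∅),
            vacExt mA p.1 * mBA p.2 from rfl, hconv]
    refine Finset.sum_eq_zero fun q hq => ?_
    simp only [Finset.mem_filter, Finset.mem_univ, true_and] at hq
    rcases Finset.eq_empty_or_nonempty q.1 with h | ⟨i, hiV⟩
    · rw [h, hA.1, zero_mul]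
    · have hTi : q.2 i = ∅ := by
        by_contra hne
        obtain ⟨b, hb⟩ := Finset.nonempty_iff_ne_empty.mpr hne
        have hmem : (i, b) ∈ (q.1 ×ˢ (Finset.univ : Finset (Fin m))) ∩ Cs Finset.univ q.2 := by
          rw [prodU_inter_Cs]; simp [hiV, hb]
        rw [hq] at hmem
        exact absurd hmem (Finset.notMem_empty _)
      rw [gf_univ, Finset.prod_eq_zero (Finset.mem_univ i)
        (by rw [hTi]; exact hB0 i), mul_zero]
  refine ⟨key1, ?_, ?_⟩
  · intro V T hT
    rw [hAB]
    rcases Finset.eq_empty_or_nonempty V with hV | ⟨i0, hi0⟩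
    · subst hV
      simp [dempster, hA.1]
    · obtain ⟨b0, hb0⟩ := hT i0 hi0
      set Y := V.biUnion (fun i => {i} ×ˢ T i) with hYdef
      have hYfil : Y = Finset.univ.filter (fun p => p.1 ∈ V ∧ p.2 ∈ T p.1) :=
        biUnion_eq_filter V T
      have hYne : Y ≠ ∅ := by
        intro hc
        have hmem : (i0, b0) ∈ Y :=
          Finset.mem_biUnion.mpr ⟨i0, hi0, by simp [hb0]⟩
        rw [hc] at hmem
        exact absurd hmem (Finset.notMem_empty _)
      rw [show dempster (vacExt mA) mBA Y
          = (1 - conflict (vacExt mA) mBA)⁻¹ *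
            ∑ p ∈ Finset.univ.filter
              (fun p : Finset (Fin n × Fin m) × Finset (Fin n × Fin m) => p.1 ∩ p.2 = Y),
              vacExt mA p.1 * mBA p.2 from if_neg hYne,
        key1, hconv]
      norm_num
      rw [Finset.sum_filter]
      have point : ∀ q : Finset (Fin n) × (Fin n → Finset (Fin m)),
          (if (q.1 ×ˢ (Finset.univ : Finset (Fin m))) ∩ Cs Finset.univ q.2 = Y
            then mA q.1 * gf mBa Finset.univ q.2 else 0)
          = (if q.1 = V ∧ ∀ i ∈ V, q.2 i = T i
            then mA q.1 * gf mBa Finset.univ q.2 else 0) := by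
        intro q
        by_cases hc : q.1 = V ∧ ∀ i ∈ V, q.2 i = T i
        · rw [if_pos hc, if_pos]
          rw [prodU_inter_Cs, hYfil, hc.1]
          refine Finset.filter_congr fun p _ => ?_
          constructor
          · rintro ⟨h1, h2⟩; exact ⟨h1, (hc.2 p.1 h1) ▸ h2⟩
          · rintro ⟨h1, h2⟩; exact ⟨h1, (hc.2 p.1 h1).symm ▸ h2⟩
        · rw [if_neg hc]
          by_cases hw : (q.1 ×ˢ (Finset.univ : Finset (Fin m))) ∩ Cs Finset.univ q.2 = Y
          · rw [if_pos hw]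
            rw [prodU_inter_Cs, hYfil] at hw
            have Hp : ∀ p : Fin n × Fin m,
                (p.1 ∈ q.1 ∧ p.2 ∈ q.2 p.1) ↔ (p.1 ∈ V ∧ p.2 ∈ T p.1) := by
              intro p
              have := Finset.ext_iff.mp hw p
              simpa using this
            have hVsub : V ⊆ q.1 := fun i hiV => by
              obtain ⟨b, hb⟩ := hT i hiV
              exact ((Hp (i, b)).mpr ⟨hiV, hb⟩).1
            have hTeq : ∀ i ∈ V, q.2 i = T i := fun i hiV => by
              ext b
              constructor
              · intro hb; exact ((Hp (i, b)).mp ⟨hVsub hiV, hb⟩).2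
              · intro hb; exact ((Hp (i, b)).mpr ⟨hiV, hb⟩).2
            have hne : q.1 ≠ V := fun hc' => hc ⟨hc', hTeq⟩
            obtain ⟨i, hiq, hiV⟩ :=
              Finset.exists_of_ssubset (lt_of_le_of_ne hVsub (Ne.symm hne))
            have hq2 : q.2 i = ∅ := by
              rw [Finset.eq_empty_iff_forall_notMem]
              intro b hb
              exact hiV ((Hp (i, b)).mp ⟨hiq, hb⟩).1
            rw [gf_univ, Finset.prod_eq_zero (Finset.mem_univ i)
              (by rw [hq2]; exact hB0 i), mul_zero]
          · rw [if_neg hw]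
      rw [show (∑ q : Finset (Fin n) × (Fin n → Finset (Fin m)),
          if (q.1 ×ˢ (Finset.univ : Finset (Fin m))) ∩ Cs Finset.univ q.2 = Y
            then mA q.1 * gf mBa Finset.univ q.2 else 0)
          = ∑ q : Finset (Fin n) × (Fin n → Finset (Fin m)),
            if q.1 = V ∧ ∀ i ∈ V, q.2 i = T i
              then mA q.1 * gf mBa Finset.univ q.2 else 0
        from Finset.sum_congr rfl fun q _ => point q]
      rw [Fintype.sum_prod_type]
      rw [Finset.sum_eq_single_of_mem V (Finset.mem_univ V)
        (fun V' _ hne => Finset.sum_eq_zero fun T' _ => by simp [hne])]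
      have hpt2 : ∀ T' : Fin n → Finset (Fin m),
          (if V = V ∧ ∀ i ∈ V, T' i = T i
            then mA V * gf mBa Finset.univ T' else 0)
          = if (∀ i ∈ V, T' i = T i) then mA V * ∏ j, mBa j (T' j) else 0 := by
        intro T'
        rw [gf_univ]
        simp
      rw [Finset.sum_congr rfl fun T' _ => hpt2 T', ← Finset.sum_filter]
      have hfil : Finset.univ.filter
          (fun T' : Fin n → Finset (Fin m) => ∀ i ∈ V, T' i = T i)
          = Fintype.piFinset (fun i => if i ∈ V then {T i} else Finset.univ) := by
        ext T'
        simp only [Finset.mem_filter, Finset.mem_univ, true_and, Fintype.mem_piFinset]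
        constructor
        · intro h i
          by_cases hi : i ∈ V <;> simp [hi, h]
        · intro h i hi
          have := h i
          simpa [hi] using this
      rw [hfil, ← Finset.mul_sum, ← Finset.prod_univ_sum]
      congr 1
      rw [show (∏ i, ∑ x ∈ (if i ∈ V then ({T i} : Finset (Finset (Fin m)))
            else Finset.univ), mBa i x)
          = ∏ i, (if i ∈ V then mBa i (T i) else 1)
        from Finset.prod_congr rfl fun i _ => by
          by_cases hi : i ∈ V <;> simp [hi, (hB i).2.2]]
      rw [Finset.prod_ite_mem, Finset.univ_inter]
  · intro Y hnex
    rw [hAB]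
    by_cases hY0 : Y = ∅
    · rw [hY0]
      exact if_pos rfl
    · rw [show dempster (vacExt mA) mBA Y
          = (1 - conflict (vacExt mA) mBA)⁻¹ *
            ∑ p ∈ Finset.univ.filter
              (fun p : Finset (Fin n × Fin m) × Finset (Fin n × Fin m) => p.1 ∩ p.2 = Y),
              vacExt mA p.1 * mBA p.2 from if_neg hY0,
        hconv]
      have hno : ∀ q : Finset (Fin n) × (Fin n → Finset (Fin m)),
          ¬ ((q.1 ×ˢ (Finset.univ : Finset (Fin m))) ∩ Cs Finset.univ q.2 = Y) := by
        intro q hw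
        apply hnex
        refine ⟨q.1.filter (fun i => (q.2 i).Nonempty), q.2,
          fun i hi => (Finset.mem_filter.mp hi).2, ?_⟩
        rw [biUnion_eq_filter]
        rw [prodU_inter_Cs] at hw
        rw [← hw]
        refine (Finset.filter_congr fun p _ => ?_).symm
        simp only [Finset.mem_filter]; simp only [Finset.Nonempty]
        constructor
        · rintro ⟨⟨h1, _⟩, h2⟩
          exact ⟨h1, h2⟩
        · rintro ⟨h1, h2⟩
          exact ⟨⟨h1, ⟨p.2, h2⟩⟩, h2⟩
      rw [Finset.sum_filter,
        show (∑ q : Finset (Fin n) × (Fin n → Finset (Fin m)),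
          if (q.1 ×ˢ (Finset.univ : Finset (Fin m))) ∩ Cs Finset.univ q.2 = Y
            then mA q.1 * gf mBa Finset.univ q.2 else 0) = 0
        from Finset.sum_eq_zero fun q _ => if_neg (hno q), mul_zero]
end

section
/- Let m be a mass function on a finite set E = {x_1,…,x_n}. Define p̲_i = Bel_m({x_i}) and p̄_i = Pl_m({x_i}) for i = 1,…,n. Then p̲_i ≤ p̄_i for all i, and the family (p̲_i, p̄_i)_{i=1}^n is a coherent probability interval on E. -/
/-!
Belief and plausibility are dual, `Bel W + Pl Wᶜ = 1`, and as nonnegative combinations of the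
indicators `W ↦ [V ⊆ W]` and `W ↦ [V ∩ W ≠ ∅]` they are respectively supermodular and submodular.
Hence the singleton values sum to at most `Bel W` and at least `Pl W`; applied to `W = univ` this
gives [Coh1], and applied to `W = {xᵢ}ᶜ` together with duality it gives [Coh2] and [Coh3].
-/

open Finset

/-- A coherent probability interval `(lo i, hi i)_{i}` on `Fin n`:
componentwise bounds `0 ≤ lo ≤ hi ≤ 1`, together with [Coh1], [Coh2], [Coh3]. -/
def IsCoherent {n : ℕ} (lo hi : Fin n → ℝ) : Prop :=
  (∀ i, 0 ≤ lo i ∧ lo i ≤ hi i ∧ hi i ≤ 1) ∧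
  (∑ i, lo i) ≤ 1 ∧ 1 ≤ (∑ i, hi i) ∧
  (∀ i, 1 - ∑ h ∈ Finset.univ.erase i, hi h ≤ lo i) ∧
  (∀ i, hi i ≤ 1 - ∑ h ∈ Finset.univ.erase i, lo h)

/-- `Δ = S̄ + (n-2)S̲ - (n-1)` for a probability interval. -/
def intervalDelta {n : ℕ} (lo hi : Fin n → ℝ) : ℝ :=
  (∑ i, hi i) + ((n : ℝ) - 2) * (∑ i, lo i) - ((n : ℝ) - 1)

/-- A *good* coherent probability interval: coherent and `Δ ≥ 0`. -/
def IsGood {n : ℕ} (lo hi : Fin n → ℝ) : Prop :=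
  IsCoherent lo hi ∧ 0 ≤ intervalDelta lo hi

/-- The standard good mass (SGM) associated to a (good coherent) probability interval:
mass `lo i` on each singleton `{a_i}`, mass `1 - hi i - ∑_{h ≠ i} lo h` on each
complement `univ ∖ {a_i}`, mass `Δ` on `univ`, and `0` on every other set. -/
def SGM {n : ℕ} (lo hi : Fin n → ℝ) (V : Finset (Fin n)) : ℝ :=
  (∑ i ∈ Finset.univ.filter (fun i : Fin n => V = {i}), lo i)
  + (∑ i ∈ Finset.univ.filter (fun i : Fin n => V = Finset.univ \ {i}),
      (1 - hi i - ∑ h ∈ Finset.univ.erase i, lo h))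
  + (if V = Finset.univ then intervalDelta lo hi else 0)

section

variable {α : Type*} [Fintype α] [DecidableEq α] {m : Finset α → ℝ}

theorem bel_add_pl_compl (hsum : ∑ V, m V = 1) (W : Finset α) : Bel m W + Pl m Wᶜ = 1 := by
  have hfilter : univ.filter (fun V : Finset α => (V ∩ Wᶜ).Nonempty) = univ.filter (¬ · ⊆ W) := by
    ext V
    simp [← not_disjoint_iff_nonempty_inter, disjoint_compl_right_iff]
  rw [Bel, Pl, hfilter, sum_filter_add_sum_filter_not, hsum]

theorem bel_nonneg (hnonneg : ∀ V, 0 ≤ m V) (W : Finset α) : 0 ≤ Bel m W :=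
  sum_nonneg fun V _ => hnonneg V

theorem pl_nonneg (hnonneg : ∀ V, 0 ≤ m V) (W : Finset α) : 0 ≤ Pl m W :=
  sum_nonneg fun V _ => hnonneg V

theorem bel_le_one (hnonneg : ∀ V, 0 ≤ m V) (hsum : ∑ V, m V = 1) (W : Finset α) : Bel m W ≤ 1 := by
  linarith [bel_add_pl_compl hsum W, pl_nonneg hnonneg Wᶜ]

theorem pl_le_one (hnonneg : ∀ V, 0 ≤ m V) (hsum : ∑ V, m V = 1) (W : Finset α) : Pl m W ≤ 1 := by
  have := bel_add_pl_compl hsum Wᶜ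
  rw [compl_compl] at this
  linarith [bel_nonneg hnonneg Wᶜ]

theorem bel_empty : Bel m ∅ = m ∅ := by
  simp [Bel, subset_empty, filter_eq']

theorem pl_empty : Pl m ∅ = 0 := by
  simp [Pl]

theorem pl_univ (h0 : m ∅ = 0) (hsum : ∑ V, m V = 1) : Pl m univ = 1 := by
  simpa [bel_empty, h0] using bel_add_pl_compl hsum ∅

theorem bel_le_pl (hnonneg : ∀ V, 0 ≤ m V) (h0 : m ∅ = 0) (W : Finset α) : Bel m W ≤ Pl m W := by
  rw [Bel, Pl, sum_filter, sum_filter]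
  refine sum_le_sum fun V _ => ?_
  split_ifs with hsub hmeet hmeet
  · exact le_rfl
  · obtain rfl : V = ∅ := by
      by_contra hV
      exact hmeet (by rwa [inter_eq_left.mpr hsub, nonempty_iff_ne_empty])
    exact h0.le
  · exact hnonneg V
  · exact le_rfl

theorem bel_add_bel_le_bel_union_add_bel_inter (hnonneg : ∀ V, 0 ≤ m V) (A B : Finset α) :
    Bel m A + Bel m B ≤ Bel m (A ∪ B) + Bel m (A ∩ B) := by
  have hinter : univ.filter (· ⊆ A) ∩ univ.filter (· ⊆ B) = univ.filter (· ⊆ A ∩ B) := by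
    ext V
    simp [subset_inter_iff]
  have hunion : univ.filter (· ⊆ A) ∪ univ.filter (· ⊆ B) ⊆ univ.filter (· ⊆ A ∪ B) := by
    intro V
    simp only [mem_union, mem_filter_univ]
    rintro (hA | hB)
    exacts [hA.trans subset_union_left, hB.trans subset_union_right]
  have := sum_le_sum_of_subset_of_nonneg hunion fun V _ _ => hnonneg V
  rw [Bel, Bel, ← sum_union_inter, hinter]
  exact add_le_add this le_rfl

theorem pl_union_add_pl_inter_le (hnonneg : ∀ V, 0 ≤ m V) (A B : Finset α) :
    Pl m (A ∪ B) + Pl m (A ∩ B) ≤ Pl m A + Pl m B := by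
  have hunion : univ.filter (fun V : Finset α => (V ∩ (A ∪ B)).Nonempty) =
      univ.filter (fun V : Finset α => (V ∩ A).Nonempty) ∪
        univ.filter (fun V : Finset α => (V ∩ B).Nonempty) := by
    ext V
    simp [inter_union_distrib_left, union_nonempty]
  have hinter : univ.filter (fun V : Finset α => (V ∩ (A ∩ B)).Nonempty) ⊆
      univ.filter (fun V : Finset α => (V ∩ A).Nonempty) ∩
        univ.filter (fun V : Finset α => (V ∩ B).Nonempty) := by
    intro V
    simp only [mem_inter, mem_filter_univ]
    exact fun hV => ⟨hV.mono (inter_subset_inter_left inter_subset_left),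
      hV.mono (inter_subset_inter_left inter_subset_right)⟩
  have := sum_le_sum_of_subset_of_nonneg hinter fun V _ _ => hnonneg V
  rw [Pl, Pl, Pl, Pl, hunion,
    ← sum_union_inter (s₁ := univ.filter fun V : Finset α => (V ∩ A).Nonempty)]
  exact add_le_add le_rfl this

theorem sum_bel_singleton_le (hnonneg : ∀ V, 0 ≤ m V) (h0 : m ∅ = 0) (W : Finset α) :
    ∑ a ∈ W, Bel m {a} ≤ Bel m W := by
  induction W using Finset.induction_on with
  | empty => simp [bel_empty, h0]
  | insert a W ha ih =>
    have hsplit := bel_add_bel_le_bel_union_add_bel_inter hnonneg {a} W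
    rw [singleton_inter_of_notMem ha, bel_empty, h0, add_zero, ← insert_eq] at hsplit
    rw [sum_insert ha]
    linarith

theorem pl_le_sum_pl_singleton (hnonneg : ∀ V, 0 ≤ m V) (W : Finset α) :
    Pl m W ≤ ∑ a ∈ W, Pl m {a} := by
  induction W using Finset.induction_on with
  | empty => simp [pl_empty]
  | insert a W ha ih =>
    have hsplit := pl_union_add_pl_inter_le hnonneg {a} W
    rw [← insert_eq] at hsplit
    rw [sum_insert ha]
    linarith [pl_nonneg hnonneg ({a} ∩ W)]

end

/-- For any mass function `m` on `E = Fin n`, setting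
`p̲ᵢ = Bel_m({xᵢ})` and `p̄ᵢ = Pl_m({xᵢ})`, one has `p̲ᵢ ≤ p̄ᵢ` for all `i`, and
`(p̲ᵢ, p̄ᵢ)ᵢ` is a coherent probability interval on `E`. -/
theorem mass_gives_coherent_interval (n : ℕ) (m : Finset (Fin n) → ℝ)
    (hm : IsMass m) :
    (∀ i : Fin n, Bel m {i} ≤ Pl m {i}) ∧
    IsCoherent (fun i : Fin n => Bel m {i}) (fun i : Fin n => Pl m {i}) := by
  obtain ⟨h0, hbounds, hsum⟩ := hm
  have hnonneg : ∀ V, 0 ≤ m V := fun V => (hbounds V).1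
  have hbel_le_pl : ∀ i : Fin n, Bel m {i} ≤ Pl m {i} := fun i => bel_le_pl hnonneg h0 {i}
  refine ⟨hbel_le_pl, fun i => ⟨bel_nonneg hnonneg {i}, hbel_le_pl i, pl_le_one hnonneg hsum {i}⟩,
    ?_, ?_, ?_, ?_⟩
  · exact (sum_bel_singleton_le hnonneg h0 univ).trans (bel_le_one hnonneg hsum univ)
  · exact (pl_univ h0 hsum).symm.le.trans (pl_le_sum_pl_singleton hnonneg univ)
  · intro i
    have hdual := bel_add_pl_compl hsum {i}
    have hsub := pl_le_sum_pl_singleton hnonneg ({i} : Finset (Fin n))ᶜ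
    rw [compl_singleton] at hdual hsub
    linarith
  · intro i
    have hdual := bel_add_pl_compl hsum ({i} : Finset (Fin n))ᶜ
    have hsuper := sum_bel_singleton_le hnonneg h0 ({i} : Finset (Fin n))ᶜ
    rw [compl_compl, compl_singleton] at hdual
    rw [compl_singleton] at hsuper
    linarith
end

section
/- Let (p̲_i, p̄_i)_{i=1}^n be a good coherent probability interval on E = {a_1,…,a_n}. Define m on 2^E by m({a_i}) = p̲_i, m(E∖{a_i}) = 1 − p̄_i − Σ_{h≠i} p̲_h for each i, m(E) = Δ = S̄ + (n−2)S̲ − (n−1), and m(V) = 0 for every other V ⊆ E. Then m is a mass function on E (all its values are nonnegative and sum to 1, with m(∅) = 0), it has at most 2n+1 focal sets, and it satisfies Bel_m({a_i}) = p̲_i and Pl_m({a_i}) = p̄_i for all i = 1,…,n. -/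
open Finset

/-!
The standard good mass is a sum of point masses: `lo i` at `{i}`, the complement mass
`1 - hi i - ∑_{h ≠ i} lo h` at `univ \ {i}`, and `Δ` at `univ`. Summing it over a family of sets
therefore collects the weights of those points that lie in the family. The total weight is `1` by
the very choice of `Δ`, and the weights are nonnegative by [Coh3] and `Δ ≥ 0`. `Pl {i}` collects
every weight except that of `univ \ {i}`, which leaves `hi i`. `Bel {i}` collects `lo i` and, only
when `n ≤ 2`, complements or `univ` that happen to lie inside `{i}`; in exactly these degenerate
cases coherence forces their weights to vanish.
-/

lemma Finset.sum_fiberwise_eq_sum_filter_symm {ι κ M : Type*} [AddCommMonoid M] [DecidableEq κ]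
    (s : Finset ι) (t : Finset κ) (g : ι → κ) (f : ι → M) :
    ∑ j ∈ t, ∑ i ∈ s with j = g i, f i = ∑ i ∈ s with g i ∈ t, f i := by
  rw [← sum_fiberwise_eq_sum_filter]
  exact sum_congr rfl fun j _ => sum_congr (filter_congr fun i _ => eq_comm) fun _ _ => rfl

lemma Finset.inter_singleton_nonempty {α : Type*} [DecidableEq α] {s : Finset α} {a : α} :
    (s ∩ {a}).Nonempty ↔ a ∈ s := by
  simp [← coe_nonempty]

section

variable {n : ℕ} {lo hi : Fin n → ℝ}

def complementMass (lo hi : Fin n → ℝ) (i : Fin n) : ℝ :=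
  1 - hi i - ∑ h ∈ univ.erase i, lo h

lemma SGM_eq (lo hi : Fin n → ℝ) (V : Finset (Fin n)) :
    SGM lo hi V = ∑ i with V = {i}, lo i + ∑ i with V = univ \ {i}, complementMass lo hi i +
      if V = univ then intervalDelta lo hi else 0 :=
  rfl

lemma complementMass_eq_sub_sum (lo hi : Fin n → ℝ) (i : Fin n) :
    complementMass lo hi i = 1 - hi i - ((∑ h, lo h) - lo i) := by
  rw [complementMass, sum_erase_eq_sub (mem_univ i)]

lemma sum_complementMass (lo hi : Fin n → ℝ) :
    ∑ i, complementMass lo hi i = n - ∑ i, hi i - (n - 1) * ∑ i, lo i := by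
  simp only [complementMass_eq_sub_sum, sum_sub_distrib, sum_const, card_univ, Fintype.card_fin,
    nsmul_eq_mul, mul_one]
  ring

lemma sum_filter_SGM (lo hi : Fin n → ℝ) (P : Finset (Fin n) → Prop) [DecidablePred P] :
    ∑ V with P V, SGM lo hi V =
      ∑ i with P {i}, lo i + ∑ i with P (univ \ {i}), complementMass lo hi i +
        if P univ then intervalDelta lo hi else 0 := by
  simp only [SGM_eq, sum_add_distrib]
  rw [sum_fiberwise_eq_sum_filter_symm, sum_fiberwise_eq_sum_filter_symm, sum_ite_eq']
  simp only [mem_filter, mem_univ, true_and]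

lemma sum_SGM (lo hi : Fin n → ℝ) : ∑ V, SGM lo hi V = 1 := by
  have h := sum_filter_SGM lo hi fun _ => True
  simp only [filter_true, if_true] at h
  rw [h, sum_complementMass, intervalDelta]
  ring

lemma SGM_eq_zero_of_ne {V : Finset (Fin n)} (h₁ : ∀ i, V ≠ {i}) (h₂ : ∀ i, V ≠ univ \ {i})
    (h₃ : V ≠ univ) : SGM lo hi V = 0 := by
  simp [SGM, h₁, h₂, h₃]

lemma card_focal_SGM_le (lo hi : Fin n → ℝ) :
    #(univ.filter fun V => 0 < SGM lo hi V) ≤ 2 * n + 1 := by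
  set singletons : Finset (Finset (Fin n)) := univ.image fun i => {i}
  set complements : Finset (Finset (Fin n)) := univ.image fun i => univ \ {i}
  have hsub : univ.filter (fun V => 0 < SGM lo hi V) ⊆ singletons ∪ complements ∪ {univ} := by
    intro V hV
    contrapose! hV
    simp only [singletons, complements, mem_union, mem_image, mem_univ, true_and, mem_singleton,
      not_or, not_exists] at hV
    simp only [mem_filter, mem_univ, true_and, not_lt]
    rw [SGM_eq_zero_of_ne (fun i h => hV.1.1 i h.symm) (fun i h => hV.1.2 i h.symm) hV.2]
  calc #(univ.filter fun V => 0 < SGM lo hi V)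
      ≤ #(singletons ∪ complements ∪ {univ}) := card_le_card hsub
    _ ≤ #singletons + #complements + 1 :=
        (card_union_le _ _).trans (add_le_add (card_union_le _ _) (card_singleton _).le)
    _ ≤ n + n + 1 := by
        gcongr <;> exact card_image_le.trans_eq (by simp)
    _ = 2 * n + 1 := by ring

lemma pl_SGM_singleton (lo hi : Fin n → ℝ) (i : Fin n) : Pl (SGM lo hi) {i} = hi i := by
  rw [Pl, sum_filter_SGM]
  simp only [inter_singleton_nonempty, Finset.mem_singleton, mem_sdiff, mem_univ, true_and,
    filter_eq, filter_ne, sum_singleton, if_true]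
  rw [sum_erase_eq_sub (mem_univ i), sum_complementMass, complementMass_eq_sub_sum, intervalDelta]
  ring

namespace IsCoherent

variable (h : IsCoherent lo hi)
include h

lemma nonempty : Nonempty (Fin n) := by
  obtain ⟨-, -, hsum_hi, -⟩ := h
  by_contra hn
  norm_num [not_nonempty_iff.mp hn] at hsum_hi

lemma complementMass_nonneg (j : Fin n) : 0 ≤ complementMass lo hi j := by
  obtain ⟨-, -, -, -, hhi⟩ := h
  rw [complementMass]
  linarith [hhi j]

lemma complementMass_eq_zero_of_subset_singleton {i j : Fin n} (hji : univ \ {j} ⊆ {i}) :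
    complementMass lo hi j = 0 := by
  obtain ⟨hbounds, -, -, hlo, hhi⟩ := h
  rw [sdiff_singleton_eq_erase, subset_singleton_iff] at hji
  rcases hji with hj | hj
  · have hhi_j := hhi j
    have hlo_j := hlo j
    rw [hj, sum_empty] at hhi_j hlo_j
    rw [complementMass, hj, sum_empty]
    linarith [hbounds j]
  · have herase_i : univ.erase i = {j} := by
      ext x
      have := Finset.ext_iff.mp hj x
      simp only [mem_erase, mem_univ, and_true, Finset.mem_singleton] at this ⊢
      grind
    have hhi_j := hhi j
    have hlo_i := hlo i
    rw [hj, sum_singleton] at hhi_j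
    rw [herase_i, sum_singleton] at hlo_i
    rw [complementMass, hj, sum_singleton]
    linarith

lemma intervalDelta_eq_zero_of_univ_subset_singleton {i : Fin n} (hu : univ ⊆ {i}) :
    intervalDelta lo hi = 0 := by
  obtain ⟨hbounds, -, -, hlo, -⟩ := h
  replace hu : univ = {i} := hu.antisymm (subset_univ _)
  have hn : (n : ℝ) = 1 := by exact_mod_cast (by simpa using congrArg card hu : n = 1)
  have hlo_i := hlo i
  rw [hu, erase_singleton, sum_empty] at hlo_i
  rw [intervalDelta, hu, sum_singleton, sum_singleton, hn]
  linarith [hbounds i]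

lemma SGM_empty : SGM lo hi ∅ = 0 := by
  have := h.nonempty
  have hsingle : ∀ i : Fin n, ¬∅ = ({i} : Finset (Fin n)) := fun i => (singleton_ne_empty i).symm
  have hcompl : ∀ i ∈ univ.filter (fun i : Fin n => ∅ = univ \ {i}), complementMass lo hi i = 0 :=
    fun i hmem => h.complementMass_eq_zero_of_subset_singleton (i := i)
      ((mem_filter.mp hmem).2.ge.trans (empty_subset _))
  rw [SGM_eq, filter_false_of_mem fun i _ => hsingle i, sum_empty,
    if_neg univ_nonempty.ne_empty.symm]
  simpa only [zero_add, add_zero] using sum_eq_zero hcompl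

lemma bel_SGM_singleton (i : Fin n) : Bel (SGM lo hi) {i} = lo i := by
  have hcompl : ∀ j ∈ univ.filter (fun j => univ \ {j} ⊆ {i}), complementMass lo hi j = 0 :=
    fun j hj => h.complementMass_eq_zero_of_subset_singleton (mem_filter.mp hj).2
  have hdelta : (if univ ⊆ {i} then intervalDelta lo hi else 0) = 0 := by
    split_ifs with hu
    exacts [h.intervalDelta_eq_zero_of_univ_subset_singleton hu, rfl]
  rw [Bel, sum_filter_SGM, sum_eq_zero hcompl, hdelta]
  simp [filter_eq']

end IsCoherent

namespace IsGood

variable (h : IsGood lo hi)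
include h

lemma SGM_nonneg (V : Finset (Fin n)) : 0 ≤ SGM lo hi V := by
  obtain ⟨hcoh, hΔ⟩ := h
  rw [SGM_eq]
  refine add_nonneg (add_nonneg (sum_nonneg fun i _ => (hcoh.1 i).1)
    (sum_nonneg fun i _ => hcoh.complementMass_nonneg i)) ?_
  split_ifs
  exacts [hΔ, le_rfl]

lemma isMass : IsMass (SGM lo hi) :=
  ⟨h.1.SGM_empty, fun V => ⟨h.SGM_nonneg V,
    (single_le_sum (fun W _ => h.SGM_nonneg W) (mem_univ V)).trans_eq (sum_SGM lo hi)⟩,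
    sum_SGM lo hi⟩

end IsGood

end

/-- For a good coherent probability interval `(lo, hi)` on `Fin n`,
the standard good mass `SGM lo hi` (mass `lo i` on `{aᵢ}`,
`1 - hi i - ∑_{h ≠ i} lo h` on `univ ∖ {aᵢ}`, `Δ` on `univ`, `0` elsewhere) is a
mass function, has at most `2n + 1` focal sets, and its belief and plausibility on
singletons reproduce the interval: `Bel({aᵢ}) = lo i` and `Pl({aᵢ}) = hi i`. -/
theorem standard_good_mass_is_mass (n : ℕ) (lo hi : Fin n → ℝ)
    (h : IsGood lo hi) :
    IsMass (SGM lo hi) ∧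
    (Finset.univ.filter fun V : Finset (Fin n) => 0 < SGM lo hi V).card ≤ 2 * n + 1 ∧
    (∀ i, Bel (SGM lo hi) {i} = lo i) ∧
    (∀ i, Pl (SGM lo hi) {i} = hi i) :=
  ⟨h.isMass, card_focal_SGM_le lo hi, h.1.bel_SGM_singleton, pl_SGM_singleton lo hi⟩
end

section
/- Let (p̲_i, p̄_i)_{i=1}^n be a good coherent probability interval on E = {a_1,…,a_n}, and define the set function Bel : 2^E → [0,1] by Bel(V) = max{ Σ_{i : a_i ∈ V} p̲_i , 1 − Σ_{i : a_i ∉ V} p̄_i }. Then the Möbius inverse of Bel, namely m^M(V) = Σ_{W ⊆ V} (−1)^{|V∖W|} Bel(W), coincides with the standard good mass associated to (p̲, p̄): m^M({a_i}) = p̲_i and m^M(E∖{a_i}) = 1 − p̄_i − Σ_{h≠i} p̲_h for all i, m^M(E) = Δ = S̄ + (n−2)S̲ − (n−1), and m^M(V) = 0 for every other subset V of E. -/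
open Finset

/-- The natural extension of a probability interval to a candidate belief function:
`Bel(V) = max (∑_{i ∈ V} lo i) (1 - ∑_{i ∉ V} hi i)`. -/
def natExtBel {n : ℕ} (lo hi : Fin n → ℝ) (V : Finset (Fin n)) : ℝ :=
  max (∑ i ∈ V, lo i) (1 - ∑ i ∈ Vᶜ, hi i)

/-- The Möbius inverse of the natural extension:
`m^M(V) = ∑_{W ⊆ V} (-1)^{|V ∖ W|} Bel(W)`. -/
def mobiusMass {n : ℕ} (lo hi : Fin n → ℝ) (V : Finset (Fin n)) : ℝ :=
  ∑ W ∈ V.powerset, (-1 : ℝ) ^ (V.card - W.card) * natExtBel lo hi W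

lemma sum_pow_neg_one {n : ℕ} (D : Finset (Fin n)) :
    ∑ X ∈ D.powerset, (-1 : ℝ) ^ (D.card - X.card) = if D = ∅ then 1 else 0 := by
  have h : ∀ X ∈ D.powerset, (-1 : ℝ) ^ (D.card - X.card)
      = (-1 : ℝ) ^ D.card * (-1 : ℝ) ^ X.card := by
    intro X hX
    rw [mem_powerset] at hX
    have hc : X.card ≤ D.card := card_le_card hX
    have : (-1 : ℝ) ^ (D.card - X.card) * (-1 : ℝ) ^ X.card = (-1 : ℝ) ^ D.card := by
      rw [← pow_add, Nat.sub_add_cancel hc]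
    have hsq : (-1 : ℝ) ^ X.card * (-1 : ℝ) ^ X.card = 1 := by
      rw [← pow_add, Even.neg_one_pow ⟨X.card, two_mul X.card ▸ rfl⟩]
    calc (-1 : ℝ) ^ (D.card - X.card)
        = (-1 : ℝ) ^ (D.card - X.card) * ((-1 : ℝ) ^ X.card * (-1 : ℝ) ^ X.card) := by
          rw [hsq, mul_one]
      _ = (-1 : ℝ) ^ D.card * (-1 : ℝ) ^ X.card := by rw [← mul_assoc, this]
  rw [Finset.sum_congr rfl h, ← Finset.mul_sum]
  have hz : ∑ X ∈ D.powerset, (-1 : ℝ) ^ X.card = if D = ∅ then 1 else 0 := by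
    have h1 := congrArg (fun z : ℤ => (z : ℝ)) (@Finset.sum_powerset_neg_one_pow_card (Fin n) _ D)
    push_cast at h1
    convert h1 using 2 <;> simp
  rw [hz]
  by_cases hD : D = ∅ <;> simp [hD]

lemma mobius_inv {n : ℕ} (m : Finset (Fin n) → ℝ) (V : Finset (Fin n)) :
    ∑ W ∈ V.powerset, (-1 : ℝ) ^ (V.card - W.card) * (∑ U ∈ W.powerset, m U) = m V := by
  have key : ∀ W ∈ V.powerset, (-1 : ℝ) ^ (V.card - W.card) * (∑ U ∈ W.powerset, m U)
      = ∑ U ∈ V.powerset, (if U ⊆ W then (-1 : ℝ) ^ (V.card - W.card) * m U else 0) := by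
    intro W hW
    rw [mem_powerset] at hW
    rw [Finset.sum_ite, Finset.sum_const_zero, add_zero, Finset.mul_sum]
    apply Finset.sum_congr _ (fun _ _ => rfl)
    ext U
    simp only [mem_filter, mem_powerset]
    exact ⟨fun h => ⟨h.trans hW, h⟩, fun h => h.2⟩
  rw [Finset.sum_congr rfl key, Finset.sum_comm]
  have inner : ∀ U ∈ V.powerset,
      (∑ W ∈ V.powerset, if U ⊆ W then (-1 : ℝ) ^ (V.card - W.card) * m U else 0)
      = (if U = V then 1 else 0) * m U := by
    intro U hU
    rw [mem_powerset] at hU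
    rw [Finset.sum_ite, Finset.sum_const_zero, add_zero]
    have himg : V.powerset.filter (fun W => U ⊆ W) = (V \ U).powerset.image (fun X => U ∪ X) := by
      ext W
      simp only [mem_filter, mem_powerset, mem_image]
      constructor
      · rintro ⟨hWV, hUW⟩
        exact ⟨W \ U, by simp [Finset.sdiff_subset_sdiff hWV (le_refl U)],
          by rw [Finset.union_sdiff_of_subset hUW]⟩
      · rintro ⟨X, hX, rfl⟩
        exact ⟨Finset.union_subset hU (hX.trans sdiff_subset), subset_union_left⟩
    rw [himg, Finset.sum_image (fun X hX Y hY hXY => by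
      rw [Finset.mem_coe, mem_powerset] at hX hY
      have hdX : Disjoint U X := Finset.disjoint_of_subset_right hX sdiff_disjoint.symm
      have hdY : Disjoint U Y := Finset.disjoint_of_subset_right hY sdiff_disjoint.symm
      calc X = (U ∪ X) \ U := by rw [Finset.union_sdiff_cancel_left hdX]
        _ = (U ∪ Y) \ U := by rw [hXY]
        _ = Y := Finset.union_sdiff_cancel_left hdY)]
    have hcard : ∀ X ∈ (V \ U).powerset,
        V.card - (U ∪ X).card = (V \ U).card - X.card := by
      intro X hX
      rw [mem_powerset] at hX
      have hdX : Disjoint U X := Finset.disjoint_of_subset_right hX sdiff_disjoint.symm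
      rw [Finset.card_union_of_disjoint hdX, Finset.card_sdiff_of_subset hU]
      omega
    calc ∑ X ∈ (V \ U).powerset, (-1 : ℝ) ^ (V.card - (U ∪ X).card) * m U
        = ∑ X ∈ (V \ U).powerset, (-1 : ℝ) ^ ((V \ U).card - X.card) * m U := by
          exact Finset.sum_congr rfl (fun X hX => by rw [hcard X hX])
      _ = (∑ X ∈ (V \ U).powerset, (-1 : ℝ) ^ ((V \ U).card - X.card)) * m U := by
          rw [Finset.sum_mul]
      _ = (if U = V then 1 else 0) * m U := by
          rw [sum_pow_neg_one]
          congr 1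
          simp only [Finset.sdiff_eq_empty_iff_subset]
          exact if_congr ⟨fun h => le_antisymm hU h, fun h => h ▸ le_refl V⟩ rfl rfl
  rw [Finset.sum_congr rfl inner]
  simp only [ite_mul, one_mul, zero_mul]
  rw [Finset.sum_ite_eq' V.powerset V m]
  simp

lemma bel_SGM {n : ℕ} (lo hi : Fin n → ℝ) (h : IsGood lo hi) (V : Finset (Fin n)) :
    ∑ W ∈ V.powerset, SGM lo hi W = natExtBel lo hi V := by
  obtain ⟨⟨hbd, hS1, hS2, hcoh2, hcoh3⟩, hΔ⟩ := h
  have herase : ∀ i, ∑ h ∈ Finset.univ.erase i, lo h = (∑ h, lo h) - lo i := by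
    intro i
    have := Finset.add_sum_erase Finset.univ lo (Finset.mem_univ i)
    linarith
  -- compute the three partial sums
  have s1 : ∑ W ∈ V.powerset, (∑ i ∈ Finset.univ.filter (fun i : Fin n => W = {i}), lo i)
      = ∑ i ∈ V, lo i := by
    have : ∀ W ∈ V.powerset, (∑ i ∈ Finset.univ.filter (fun i : Fin n => W = {i}), lo i)
        = ∑ i : Fin n, if W = {i} then lo i else 0 := fun W _ => (Finset.sum_filter _ _)
    rw [Finset.sum_congr rfl this, Finset.sum_comm]
    have : ∀ i ∈ (Finset.univ : Finset (Fin n)),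
        (∑ W ∈ V.powerset, if W = {i} then lo i else 0)
        = if i ∈ V then lo i else 0 := by
      intro i _
      rw [Finset.sum_ite_eq' V.powerset ({i} : Finset (Fin n)) (fun _ => lo i)]
      simp [Finset.singleton_subset_iff]
    rw [Finset.sum_congr rfl this, Finset.sum_ite_mem, Finset.univ_inter]
  have s2 : ∑ W ∈ V.powerset, (∑ i ∈ Finset.univ.filter (fun i : Fin n => W = Finset.univ \ {i}),
        (1 - hi i - ∑ h ∈ Finset.univ.erase i, lo h))
      = ∑ i : Fin n, if Finset.univ \ {i} ⊆ V then (1 - hi i - ∑ h ∈ Finset.univ.erase i, lo h) else 0 := by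
    have : ∀ W ∈ V.powerset, (∑ i ∈ Finset.univ.filter (fun i : Fin n => W = Finset.univ \ {i}),
          (1 - hi i - ∑ h ∈ Finset.univ.erase i, lo h))
        = ∑ i : Fin n, if W = Finset.univ \ {i} then (1 - hi i - ∑ h ∈ Finset.univ.erase i, lo h) else 0 :=
      fun W _ => (Finset.sum_filter _ _)
    rw [Finset.sum_congr rfl this, Finset.sum_comm]
    refine Finset.sum_congr rfl (fun i _ => ?_)
    rw [Finset.sum_ite_eq' V.powerset (Finset.univ \ {i}) (fun _ => _)]
    simp [Finset.mem_powerset]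
  have s3 : ∑ W ∈ V.powerset, (if W = Finset.univ then intervalDelta lo hi else 0)
      = if V = Finset.univ then intervalDelta lo hi else 0 := by
    rw [Finset.sum_ite_eq' V.powerset (Finset.univ : Finset (Fin n)) (fun _ => intervalDelta lo hi)]
    simp only [Finset.mem_powerset]
    exact if_congr ⟨fun h2 => le_antisymm (Finset.subset_univ V) h2, fun h2 => h2 ▸ le_refl _⟩ rfl rfl
  have split : ∑ W ∈ V.powerset, SGM lo hi W
      = (∑ i ∈ V, lo i)
        + (∑ i : Fin n, if Finset.univ \ {i} ⊆ V then (1 - hi i - ∑ h ∈ Finset.univ.erase i, lo h) else 0)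
        + (if V = Finset.univ then intervalDelta lo hi else 0) := by
    rw [← s1, ← s2, ← s3]
    simp [SGM, Finset.sum_add_distrib]
  rw [split]
  -- condition rewrite : univ \ {i} ⊆ V ↔ Vᶜ ⊆ {i}
  have hcond : ∀ i : Fin n, (Finset.univ \ { i } ⊆ V) ↔ Vᶜ ⊆ {i} := by
    intro i
    constructor
    · intro h x hx
      rw [Finset.mem_compl] at hx
      by_contra hxi
      rw [Finset.mem_singleton] at hxi
      exact hx (h (Finset.mem_sdiff.mpr ⟨Finset.mem_univ x, by simpa using hxi⟩))
    · intro h x hx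
      rw [Finset.mem_sdiff] at hx
      by_contra hxV
      have := h (Finset.mem_compl.mpr hxV)
      rw [Finset.mem_singleton] at this
      exact hx.2 (by simpa using this)
  by_cases hV : V = Finset.univ
  · subst hV
    have hcompl : (Finset.univ : Finset (Fin n))ᶜ = ∅ := Finset.compl_univ
    have : ∀ i : Fin n, (if Finset.univ \ {i} ⊆ (Finset.univ : Finset (Fin n)) then
        (1 - hi i - ∑ h ∈ Finset.univ.erase i, lo h) else 0)
        = 1 - hi i - ((∑ h, lo h) - lo i) := by
      intro i
      rw [if_pos (Finset.subset_univ _), herase]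
    rw [Finset.sum_congr rfl (fun i _ => this i), if_pos rfl]
    unfold natExtBel
    rw [Finset.compl_univ]
    have hexp : ∑ i : Fin n, (1 - hi i - ((∑ h, lo h) - lo i))
        = (n : ℝ) - (∑ i, hi i) - (n : ℝ) * (∑ h, lo h) + (∑ i, lo i) := by
      rw [Finset.sum_sub_distrib, Finset.sum_sub_distrib, Finset.sum_sub_distrib]
      simp [Finset.sum_const, Finset.card_univ, mul_comm]
      ring
    rw [hexp]
    simp only [Finset.sum_empty, sub_zero]
    rw [max_eq_right (by linarith)]
    unfold intervalDelta
    ring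
  · have hVne : Vᶜ.Nonempty := by
      rw [Finset.nonempty_iff_ne_empty]
      intro hc
      exact hV ((compl_eq_empty_iff V).mp hc)
    rw [if_neg hV, add_zero]
    by_cases h1 : Vᶜ.card = 1
    · obtain ⟨i, hi'⟩ := Finset.card_eq_one.mp h1
      have hVeq : V = Finset.univ.erase i := by
        have : Vᶜᶜ = ({i} : Finset (Fin n))ᶜ := by rw [hi']
        rw [compl_compl] at this
        rw [this, Finset.compl_singleton]
      have hcond2 : ∀ j : Fin n, (Finset.univ \ {j} ⊆ V) ↔ j = i := by
        intro j
        rw [hcond, hi', Finset.singleton_subset_singleton]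
        exact eq_comm
      have : ∀ j ∈ (Finset.univ : Finset (Fin n)),
          (if Finset.univ \ {j} ⊆ V then (1 - hi j - ∑ h ∈ Finset.univ.erase j, lo h) else 0)
          = if j = i then (1 - hi j - ∑ h ∈ Finset.univ.erase j, lo h) else 0 := by
        intro j _
        exact if_congr (hcond2 j) rfl rfl
      rw [Finset.sum_congr rfl this, Finset.sum_ite_eq' Finset.univ i, if_pos (Finset.mem_univ i)]
      have hVsum : ∑ j ∈ V, lo j = ∑ h ∈ Finset.univ.erase i, lo h := by rw [hVeq]
      have hVc : ∑ j ∈ Vᶜ, hi j = hi i := by rw [hi', Finset.sum_singleton]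
      unfold natExtBel
      rw [hVsum, hVc, max_eq_right (by have := hcoh3 i; linarith)]
      ring
    · -- |Vᶜ| ≥ 2
      have h2 : 2 ≤ Vᶜ.card := by
        rcases Finset.card_pos.mpr hVne with hp
        omega
      have hcondall : ∀ j : Fin n, ¬ (Finset.univ \ {j} ⊆ V) := by
        intro j hj
        have := Finset.card_le_card ((hcond j).mp hj)
        simp at this
        omega
      have : ∀ j ∈ (Finset.univ : Finset (Fin n)),
          (if Finset.univ \ {j} ⊆ V then (1 - hi j - ∑ h ∈ Finset.univ.erase j, lo h) else 0) = 0 :=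
        fun j _ => if_neg (hcondall j)
      rw [Finset.sum_congr rfl this, Finset.sum_const_zero, add_zero]
      unfold natExtBel
      rw [max_eq_left]
      -- 1 - ∑_{Vᶜ} hi ≤ ∑_V lo
      have hhi : ∀ i, hi i ≤ 1 - (∑ h, lo h) + lo i := by
        intro i
        have := hcoh3 i
        rw [herase] at this
        linarith
      have hsumV : ∑ i ∈ V, hi i ≤ (V.card : ℝ) * (1 - (∑ h, lo h)) + ∑ i ∈ V, lo i := by
        calc ∑ i ∈ V, hi i ≤ ∑ i ∈ V, (1 - (∑ h, lo h) + lo i) :=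
              Finset.sum_le_sum (fun i _ => hhi i)
          _ = (V.card : ℝ) * (1 - (∑ h, lo h)) + ∑ i ∈ V, lo i := by
              rw [Finset.sum_add_distrib, Finset.sum_const, nsmul_eq_mul]
      have hcompl_sum : ∑ i ∈ Vᶜ, hi i + ∑ i ∈ V, hi i = ∑ i, hi i :=
        Finset.sum_compl_add_sum V hi
      have hcards : V.card + Vᶜ.card = n := by
        have := Finset.card_add_card_compl V
        simpa [Fintype.card_fin] using this
      have hcV : (V.card : ℝ) ≤ (n : ℝ) - 2 := by
        have : V.card + 2 ≤ n := by omega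
        have := Nat.cast_le (α := ℝ) |>.mpr this
        push_cast at this
        linarith
      have hnn : (0 : ℝ) ≤ 1 - (∑ h, lo h) := by linarith
      have hmul : (V.card : ℝ) * (1 - (∑ h, lo h)) ≤ ((n : ℝ) - 2) * (1 - (∑ h, lo h)) :=
        mul_le_mul_of_nonneg_right hcV hnn
      unfold intervalDelta at hΔ
      nlinarith

/-- For a good coherent probability interval `(lo, hi)` on
`E = Fin n`, the Möbius inverse of the natural extension
`Bel(V) = max (∑_{i ∈ V} lo i) (1 - ∑_{i ∉ V} hi i)` coincides with the standard
good mass associated to `(lo, hi)`: it equals `lo i` on each singleton `{aᵢ}`,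
`1 - hi i - ∑_{h ≠ i} lo h` on each `E ∖ {aᵢ}`, `Δ = S̄ + (n-2)S̲ - (n-1)` on `E`,
and `0` on every other subset of `E`. -/
theorem mobius_eq_standard_good_mass (n : ℕ) (lo hi : Fin n → ℝ)
    (h : IsGood lo hi) :
    ∀ V : Finset (Fin n), mobiusMass lo hi V = SGM lo hi V := by
  intro V
  unfold mobiusMass
  have : ∀ W ∈ V.powerset, (-1 : ℝ) ^ (V.card - W.card) * natExtBel lo hi W
      = (-1 : ℝ) ^ (V.card - W.card) * (∑ U ∈ W.powerset, SGM lo hi U) := by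
    intro W _
    rw [bel_SGM lo hi h W]
  rw [Finset.sum_congr rfl this]
  exact mobius_inv (SGM lo hi) V
end

section
/- Let (p̲_i, p̄_i)_{i=1}^n be a good coherent probability interval on E = {a_1,…,a_n} with n ≥ 4. Then for every subset V ⊆ E with 2 ≤ |V| ≤ n−2, one has Σ_{i : a_i ∈ V} p̲_i ≥ 1 − Σ_{i : a_i ∉ V} p̄_i. -/
/-!
By [Coh3], each spread `hi i - lo i` is at most the slack `1 - ∑ lo`, while `Δ ≥ 0` says
exactly that the spreads add up to at least `n - 1` slacks. Removing the at most `n - 2`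
spreads indexed by `V` therefore leaves at least one slack, which is the claim rearranged.
-/

open Finset

section

variable {n : ℕ} {lo hi : Fin n → ℝ}

theorem IsCoherent.hi_sub_lo_le_one_sub_sum_lo (h : IsCoherent lo hi) (i : Fin n) :
    hi i - lo i ≤ 1 - ∑ j, lo j := by
  have hcoh3 := h.2.2.2.2 i
  rw [← add_sum_erase univ lo (mem_univ i)]
  linarith

theorem intervalDelta_eq_sum_sub_sub (lo hi : Fin n → ℝ) :
    intervalDelta lo hi = ∑ i, (hi i - lo i) - ((n : ℝ) - 1) * (1 - ∑ i, lo i) := by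
  rw [intervalDelta, sum_sub_distrib]
  ring

theorem IsGood.one_sub_sum_lo_le_sum_compl {V : Finset (Fin n)} (h : IsGood lo hi)
    (hV : V.card + 2 ≤ n) :
    1 - ∑ i, lo i ≤ ∑ i ∈ Vᶜ, (hi i - lo i) := by
  obtain ⟨hcoh, hΔ⟩ := h
  set t := 1 - ∑ i, lo i
  have ht : 0 ≤ t := sub_nonneg.mpr hcoh.2.1
  have hcard : (V.card : ℝ) ≤ n - 2 := by
    have : (V.card : ℝ) + 2 ≤ n := by exact_mod_cast hV
    linarith
  have hspreadV : ∑ i ∈ V, (hi i - lo i) ≤ V.card * t := by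
    simpa using sum_le_card_nsmul V _ t fun i _ => hcoh.hi_sub_lo_le_one_sub_sum_lo i
  have hspread : ((n : ℝ) - 1) * t ≤ ∑ i, (hi i - lo i) := by
    rw [intervalDelta_eq_sum_sub_sub] at hΔ
    linarith
  calc t = ((n : ℝ) - 1) * t - ((n : ℝ) - 2) * t := by ring
    _ ≤ ∑ i, (hi i - lo i) - V.card * t := by gcongr
    _ ≤ ∑ i, (hi i - lo i) - ∑ i ∈ V, (hi i - lo i) := by gcongr
    _ = ∑ i ∈ Vᶜ, (hi i - lo i) := by rw [← sum_add_sum_compl V]; ring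

end

theorem good_interval_middle_sets_general (n : ℕ) (hn : 4 ≤ n) (lo hi : Fin n → ℝ)
    (h : IsGood lo hi) (V : Finset (Fin n))
    (hV2 : V.card ≤ n - 2) :
    1 - ∑ i ∈ Vᶜ, hi i ≤ ∑ i ∈ V, lo i := by
  have hV : V.card + 2 ≤ n := by omega
  have hspread := h.one_sub_sum_lo_le_sum_compl hV
  rw [sum_sub_distrib, ← sum_add_sum_compl V lo] at hspread
  linarith

/-- For a good coherent probability interval `(lo, hi)` on
`E = Fin n` with `n ≥ 4`, every subset `V ⊆ E` with `2 ≤ |V| ≤ n - 2` satisfies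
`∑_{i ∈ V} lo i ≥ 1 - ∑_{i ∉ V} hi i`. -/
theorem good_interval_middle_sets (n : ℕ) (hn : 4 ≤ n) (lo hi : Fin n → ℝ)
    (h : IsGood lo hi) (V : Finset (Fin n))
    (hV1 : 2 ≤ V.card) (hV2 : V.card ≤ n - 2) :
    1 - ∑ i ∈ Vᶜ, hi i ≤ ∑ i ∈ V, lo i :=
  good_interval_middle_sets_general n hn lo hi h V hV2
end

section
/- Let (p̲_i, p̄_i)_{i=1}^n be a coherent probability interval and let c_1 ≤ c_2 ≤ … ≤ c_n be real numbers. Let ĩ be the least index i such that Σ_{h ≤ i} p̄_h + Σ_{h > i} p̲_h ≥ 1, and set x_ĩ = 1 − Σ_{h < ĩ} p̄_h − Σ_{h > ĩ} p̲_h. Then x_ĩ ∈ [p̲_ĩ, p̄_ĩ], and the minimum of Σ_{i=1}^n c_i x_i over all (x_1,…,x_n) with p̲_i ≤ x_i ≤ p̄_i and Σ_i x_i = 1 equals Σ_{i < ĩ} c_i p̄_i + c_ĩ x_ĩ + Σ_{i > ĩ} c_i p̲_i. -/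
open Finset

/-!
Since `c` is increasing, the minimum is attained at the greedy point `y` that puts the upper
bound `hi i` on the cheapest coordinates `i < ĩ`, the lower bound on the dearest ones `i > ĩ`,
and whatever mass remains on `ĩ`. Any feasible `x` satisfies `x ≤ y` below `ĩ` and `x ≥ y`
above it, so, as `∑ x = ∑ y`,
`∑ c x - ∑ c y = ∑ (c i - c ĩ) (x i - y i) ≥ 0` term by term.
The remaining mass lies in `[lo ĩ, hi ĩ]`: the upper bound is the defining inequality of `ĩ`,
the lower one is the failure of that inequality at the predecessor of `ĩ`
(or `∑ lo ≤ 1` if `ĩ` is the first index).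
-/

section
variable {ι R : Type*} [LinearOrder ι]

theorem Finset.sum_eq_sum_Iio_add_add_sum_Ioi [Fintype ι] [LocallyFiniteOrderBot ι]
    [LocallyFiniteOrderTop ι] [AddCommMonoid R] (f : ι → R) (a : ι) :
    ∑ i, f i = ∑ i ∈ Iio a, f i + f a + ∑ i ∈ Ioi a, f i := by
  rw [← sum_filter_add_sum_filter_not univ (· < a)]
  simp only [not_lt, filter_gt_eq_Iio, filter_le_eq_Ici, ← add_sum_Ioi_eq_sum_Ici, add_assoc]

theorem Monotone.sum_mul_le_sum_mul_of_sum_eq [Fintype ι] [CommRing R] [LinearOrder R]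
    [IsOrderedRing R] {c x y : ι → R} {a : ι} (hc : Monotone c)
    (hlt : ∀ i < a, x i ≤ y i) (hgt : ∀ i, a < i → y i ≤ x i)
    (hsum : ∑ i, x i = ∑ i, y i) :
    ∑ i, c i * y i ≤ ∑ i, c i * x i := by
  have hterm (i : ι) : 0 ≤ (c i - c a) * (x i - y i) := by
    rcases lt_trichotomy i a with h | rfl | h
    · exact mul_nonneg_of_nonpos_of_nonpos (sub_nonpos.2 (hc h.le)) (sub_nonpos.2 (hlt i h))
    · simp
    · exact mul_nonneg (sub_nonneg.2 (hc h.le)) (sub_nonneg.2 (hgt i h))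
  have hexpand : ∑ i, (c i - c a) * (x i - y i)
      = ∑ i, c i * x i - ∑ i, c i * y i - c a * (∑ i, x i - ∑ i, y i) := by
    simp only [sub_mul, mul_sub, sum_sub_distrib, ← mul_sum]
    ring
  have := sum_nonneg fun i (_ : i ∈ univ) => hterm i
  rw [hexpand, hsum, sub_self, mul_zero, sub_zero] at this
  exact sub_nonneg.1 this

def greedyPoint (lo hi : ι → R) (a : ι) (t : R) (i : ι) : R :=
  if i < a then hi i else if i = a then t else lo i

section greedyPoint
variable {lo hi : ι → R} {a : ι} {t : R}

theorem greedyPoint_mem_Icc [Preorder R] (hlohi : lo ≤ hi) (ht : t ∈ Set.Icc (lo a) (hi a))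
    (i : ι) : greedyPoint lo hi a t i ∈ Set.Icc (lo i) (hi i) := by
  unfold greedyPoint
  split_ifs with hlt heq
  · exact ⟨hlohi i, le_rfl⟩
  · exact heq ▸ ht
  · exact ⟨le_rfl, hlohi i⟩

variable [Fintype ι] [LocallyFiniteOrderBot ι] [LocallyFiniteOrderTop ι]

theorem sum_mul_greedyPoint [NonUnitalNonAssocSemiring R] (c : ι → R) :
    ∑ i, c i * greedyPoint lo hi a t i
      = ∑ i ∈ Iio a, c i * hi i + c a * t + ∑ i ∈ Ioi a, c i * lo i := by
  have hbelow : ∀ i ∈ Iio a, c i * greedyPoint lo hi a t i = c i * hi i := fun i hmem => by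
    simp [greedyPoint, mem_Iio.mp hmem]
  have habove : ∀ i ∈ Ioi a, c i * greedyPoint lo hi a t i = c i * lo i := fun i hmem => by
    simp [greedyPoint, (mem_Ioi.mp hmem).not_gt, (mem_Ioi.mp hmem).ne']
  rw [sum_eq_sum_Iio_add_add_sum_Ioi _ a, sum_congr rfl hbelow, sum_congr rfl habove]
  simp [greedyPoint]

theorem sum_greedyPoint [NonAssocSemiring R] :
    ∑ i, greedyPoint lo hi a t i = ∑ i ∈ Iio a, hi i + t + ∑ i ∈ Ioi a, lo i := by
  simpa using sum_mul_greedyPoint (lo := lo) (hi := hi) (a := a) (t := t) 1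

end greedyPoint

section OrderedAddCommGroup
variable [AddCommGroup R] [LinearOrder R] [IsOrderedAddMonoid R] {lo hi : ι → R} {a : ι} {s : R}

theorem sub_sum_Iio_sub_sum_Ioi_le [LocallyFiniteOrderBot ι] [LocallyFiniteOrderTop ι]
    (h : s ≤ ∑ i ∈ Iic a, hi i + ∑ i ∈ Ioi a, lo i) :
    s - ∑ i ∈ Iio a, hi i - ∑ i ∈ Ioi a, lo i ≤ hi a := by
  rw [← sum_Iio_add_eq_sum_Iic] at h
  rw [← sub_nonpos]
  convert sub_nonpos.2 h using 1
  abel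

theorem le_sub_sum_Iio_sub_sum_Ioi [Fintype ι] [LocallyFiniteOrderBot ι]
    [LocallyFiniteOrderTop ι] [PredOrder ι] (hlo : ∑ i, lo i ≤ s)
    (h : ∀ j < a, ∑ i ∈ Iic j, hi i + ∑ i ∈ Ioi j, lo i < s) :
    lo a ≤ s - ∑ i ∈ Iio a, hi i - ∑ i ∈ Ioi a, lo i := by
  by_cases ha : IsMin a
  · rw [sum_eq_sum_Iio_add_add_sum_Ioi _ a, Iio_eq_empty.2 ha, sum_empty] at hlo
    rw [Iio_eq_empty.2 ha, sum_empty, ← sub_nonpos]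
    convert sub_nonpos.2 hlo using 1
    abel
  · have hpred := h _ (Order.pred_lt_of_not_isMin ha)
    rw [Iic_pred_eq_Iio_of_not_isMin ha, Ioi_pred_eq_Ici_of_not_isMin ha,
      ← add_sum_Ioi_eq_sum_Ici] at hpred
    rw [← sub_nonpos]
    convert (sub_neg.2 hpred).le using 1
    abel

end OrderedAddCommGroup

end

/-- Let `(lo, hi)` be a coherent probability interval on `Fin n` and
`c` a monotone (increasing) family of coefficients. Let `i₀` be the least index
with `∑_{h ≤ i₀} hi h + ∑_{h > i₀} lo h ≥ 1`, and set
`x_{i₀} = 1 - ∑_{h < i₀} hi h - ∑_{h > i₀} lo h`. Then `x_{i₀} ∈ [lo i₀, hi i₀]`,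
and the minimum of `∑ᵢ cᵢ xᵢ` over all `x` with `lo i ≤ x i ≤ hi i` and
`∑ᵢ xᵢ = 1` equals `∑_{i < i₀} cᵢ · hi i + c_{i₀} · x_{i₀} + ∑_{i > i₀} cᵢ · lo i`. -/
theorem credal_linear_minimum (n : ℕ) (lo hi : Fin n → ℝ)
    (hcoh : IsCoherent lo hi) (c : Fin n → ℝ) (hc : Monotone c) (i₀ : Fin n)
    (h₁ : 1 ≤ (∑ h ∈ Finset.Iic i₀, hi h) + ∑ h ∈ Finset.Ioi i₀, lo h)
    (h₂ : ∀ i < i₀, (∑ h ∈ Finset.Iic i, hi h) + (∑ h ∈ Finset.Ioi i, lo h) < 1) :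
    (lo i₀ ≤ 1 - (∑ h ∈ Finset.Iio i₀, hi h) - ∑ h ∈ Finset.Ioi i₀, lo h) ∧
    (1 - (∑ h ∈ Finset.Iio i₀, hi h) - (∑ h ∈ Finset.Ioi i₀, lo h) ≤ hi i₀) ∧
    IsLeast
      {r : ℝ | ∃ x : Fin n → ℝ, (∀ i, lo i ≤ x i ∧ x i ≤ hi i) ∧ (∑ i, x i) = 1 ∧
        r = ∑ i, c i * x i}
      ((∑ i ∈ Finset.Iio i₀, c i * hi i)
        + c i₀ * (1 - (∑ h ∈ Finset.Iio i₀, hi h) - ∑ h ∈ Finset.Ioi i₀, lo h)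
        + ∑ i ∈ Finset.Ioi i₀, c i * lo i) := by
  obtain ⟨hbounds, hlo, -⟩ := hcoh
  set t := 1 - ∑ h ∈ Iio i₀, hi h - ∑ h ∈ Ioi i₀, lo h
  have ht : t ∈ Set.Icc (lo i₀) (hi i₀) :=
    ⟨le_sub_sum_Iio_sub_sum_Ioi hlo h₂, sub_sum_Iio_sub_sum_Ioi_le h₁⟩
  set y := greedyPoint lo hi i₀ t
  have hy : ∑ i, y i = 1 := by rw [sum_greedyPoint]; ring
  refine ⟨ht.1, ht.2, ⟨y, greedyPoint_mem_Icc (fun i => (hbounds i).2.1) ht, hy,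
    (sum_mul_greedyPoint c).symm⟩, ?_⟩
  rintro _ ⟨x, hx, hsum, rfl⟩
  rw [← sum_mul_greedyPoint]
  refine hc.sum_mul_le_sum_mul_of_sum_eq (a := i₀) (fun i hlt => ?_) (fun i hgt => ?_)
    (hsum.trans hy.symm)
  · simpa [y, greedyPoint, hlt] using (hx i).2
  · simpa [y, greedyPoint, hgt.not_gt, hgt.ne'] using (hx i).1
end

section
/- Let (p̲^A_i, p̄^A_i)_{i=1}^n be a coherent probability interval on E_A = {a_1,…,a_n} (possibly not good), and let (p̲^A_i, q̄^A_i)_{i=1}^n be a good coherent probability interval with the same lower bounds and with q̄^A_i ≥ p̄^A_i for all i (a fixing of the original interval). Let m_A be the standard good mass associated to (p̲^A, q̄^A), and, for a fixed j, let p̲^i_j ≤ p̄^i_j in [0,1] be given for each i. Then p̲^B_j := Σ_{V ⊆ E_A} m_A(V) ∏_{i : a_i ∈ V} p̲^i_j ≤ min Σ_{i=1}^n y_i x_i and p̄^B_j := 1 − Σ_{V ⊆ E_A} m_A(V) ∏_{i : a_i ∈ V} (1 − p̄^i_j) ≥ max Σ_{i=1}^n y_i x_i, where the minimum and maximum are over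 all x_i ∈ [p̲^A_i, p̄^A_i] with Σ_i x_i = 1 and all y_i ∈ [p̲^i_j, p̄^i_j]. -/
open Finset

/-!
The standard good mass puts weight `lo i` on `{i}`, `c i = 1 - hi i - ∑_{h ≠ i} lo h` on
`univ \ {i}` and `Δ` on `univ`. For `f` with values in `[0, 1]` a product over a set is at most
`f` at any of its points, so every product is controlled by `f μ` at a minimiser `μ` of `f`,
except `∏_{h ≠ μ} f h`, which is controlled by the values `f i`, `i ≠ μ`. Writing `x = lo + t`,
the masses satisfy `∑ c + Δ = ∑ t` and `c μ ≤ ∑_{i ≠ μ} t i` (because `x μ ≤ hi μ`), so the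
surplus weights `t` can absorb the masses `c` and `Δ`; this gives
`∑_V m(V) ∏_{i ∈ V} f i ≤ ∑ x i * f i`. The two bounds of the theorem are this inequality for
`f = lo` and for `f = 1 - hi`, combined with monotonicity in `y`.
-/

lemma prod_le_of_mem {ι : Type*} {f : ι → ℝ} (hf : ∀ i, 0 ≤ f i ∧ f i ≤ 1)
    {s : Finset ι} {a : ι} (ha : a ∈ s) : ∏ i ∈ s, f i ≤ f a := by
  classical
  simpa using prod_le_prod_of_subset_of_le_one (singleton_subset_iff.2 ha)
    (fun i _ => (hf i).1) (fun i _ _ => (hf i).2)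

lemma sum_SGM_mul_prod {n : ℕ} (lo hi f : Fin n → ℝ) :
    ∑ V : Finset (Fin n), SGM lo hi V * ∏ i ∈ V, f i
      = ∑ i, lo i * f i
        + ∑ i, (1 - hi i - ∑ h ∈ univ.erase i, lo h) * ∏ h ∈ univ.erase i, f h
        + intervalDelta lo hi * ∏ h, f h := by
  simp only [SGM, add_mul, sum_add_distrib, sum_filter, sum_mul]
  rw [sum_comm (γ := Finset (Fin n))
      (f := fun V i => (if V = {i} then lo i else 0) * ∏ x ∈ V, f x),
    sum_comm (γ := Finset (Fin n))
      (f := fun V i => (if V = univ \ {i} then 1 - hi i - ∑ h ∈ univ.erase i, lo h else 0) *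
        ∏ x ∈ V, f x)]
  simp [ite_mul, sdiff_singleton_eq_erase]

lemma sum_mul_prod_erase_add_mul_prod_le {ι : Type*} [Fintype ι] [DecidableEq ι] [Nonempty ι]
    {f t c : ι → ℝ} {D : ℝ} (hf : ∀ i, 0 ≤ f i ∧ f i ≤ 1) (ht : ∀ i, 0 ≤ t i)
    (hc : ∀ i, 0 ≤ c i) (hD : 0 ≤ D) (hsum : ∑ i, c i + D = ∑ i, t i)
    (hct : ∀ i, c i + t i ≤ ∑ i, t i) :
    ∑ i, c i * ∏ h ∈ univ.erase i, f h + D * ∏ h, f h ≤ ∑ i, t i * f i := by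
  obtain ⟨μ, -, hμ⟩ := exists_min_image univ f univ_nonempty
  set P := ∏ h ∈ univ.erase μ, f h
  set M := max (f μ) P
  have hc_split := add_sum_erase univ c (mem_univ μ)
  have ht_split := add_sum_erase univ t (mem_univ μ)
  have hlhs : ∑ i, c i * ∏ h ∈ univ.erase i, f h + D * ∏ h, f h
      ≤ c μ * P + (∑ i ∈ univ.erase μ, c i + D) * f μ := by
    rw [← add_sum_erase _ _ (mem_univ μ), add_mul, sum_mul, add_assoc]
    gcongr with i hi
    · exact hc i
    · exact prod_le_of_mem hf (mem_erase.2 ⟨ne_of_mem_erase hi |>.symm, mem_univ μ⟩)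
    · exact prod_le_of_mem hf (mem_univ μ)
  have hrhs : t μ * f μ + (∑ i ∈ univ.erase μ, t i) * M ≤ ∑ i, t i * f i := by
    rw [← add_sum_erase _ _ (mem_univ μ), sum_mul]
    gcongr with i hi
    · exact ht i
    · exact max_le (hμ i (mem_univ i)) (prod_le_of_mem hf hi)
  have hredist : c μ * P + (t μ + ∑ i ∈ univ.erase μ, t i - c μ) * f μ
      ≤ t μ * f μ + (∑ i ∈ univ.erase μ, t i) * M := by
    nlinarith [mul_nonneg (hc μ) (sub_nonneg.2 (le_max_right (f μ) P)),
      mul_nonneg (show 0 ≤ ∑ i ∈ univ.erase μ, t i - c μ by linarith [hct μ])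
        (sub_nonneg.2 (le_max_left (f μ) P))]
  have hmass : ∑ i ∈ univ.erase μ, c i + D = t μ + ∑ i ∈ univ.erase μ, t i - c μ := by linarith
  rw [hmass] at hlhs
  linarith

lemma sum_SGM_mul_prod_le {n : ℕ} {lo hi : Fin n → ℝ} (hgood : IsGood lo hi)
    {x : Fin n → ℝ} (hx : ∀ i, lo i ≤ x i ∧ x i ≤ hi i) (hxs : ∑ i, x i = 1)
    {f : Fin n → ℝ} (hf : ∀ i, 0 ≤ f i ∧ f i ≤ 1) :
    ∑ V : Finset (Fin n), SGM lo hi V * ∏ i ∈ V, f i ≤ ∑ i, x i * f i := by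
  have : NeZero n := ⟨by rintro rfl; simp at hxs⟩
  have herase (i : Fin n) : ∑ h ∈ univ.erase i, lo h = ∑ h, lo h - lo i :=
    sum_erase_eq_sub (mem_univ i)
  have hsurplus : ∑ i, (x i - lo i) = 1 - ∑ i, lo i := by rw [sum_sub_distrib, hxs]
  have hmass : ∑ i, (1 - hi i - ∑ h ∈ univ.erase i, lo h) + intervalDelta lo hi
      = ∑ i, (x i - lo i) := by
    simp only [hsurplus, herase, intervalDelta, sum_sub_distrib, sum_const, card_univ,
      Fintype.card_fin, nsmul_eq_mul, mul_one]
    ring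
  have hbound := sum_mul_prod_erase_add_mul_prod_le (t := fun i => x i - lo i)
    (c := fun i => 1 - hi i - ∑ h ∈ univ.erase i, lo h) hf (fun i => sub_nonneg.2 (hx i).1)
    (fun i => by linarith [hgood.1.2.2.2.2 i]) hgood.2 hmass
    (fun i => by linarith [herase i, (hx i).2])
  have hsplit : ∑ i, lo i * f i + ∑ i, (x i - lo i) * f i = ∑ i, x i * f i := by
    rw [← sum_add_distrib]
    exact sum_congr rfl fun i _ => by ring
  rw [sum_SGM_mul_prod]
  linarith

theorem fixed_sgm_bounds_credal_general (n : ℕ) (loA hiA qA : Fin n → ℝ)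
    (hq : IsGood loA qA) (hfix : ∀ i, hiA i ≤ qA i)
    (lo hi : Fin n → ℝ) (hbd : ∀ i, 0 ≤ lo i ∧ lo i ≤ hi i ∧ hi i ≤ 1)
    (x : Fin n → ℝ) (hx : ∀ i, loA i ≤ x i ∧ x i ≤ hiA i) (hxs : (∑ i, x i) = 1)
    (y : Fin n → ℝ) (hy : ∀ i, lo i ≤ y i ∧ y i ≤ hi i) :
    (∑ V : Finset (Fin n), SGM loA qA V * ∏ i ∈ V, lo i) ≤ ∑ i, y i * x i ∧
    ∑ i, y i * x i ≤ 1 - ∑ V : Finset (Fin n), SGM loA qA V * ∏ i ∈ V, (1 - hi i) := by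
  have hxq (i : Fin n) : loA i ≤ x i ∧ x i ≤ qA i := ⟨(hx i).1, (hx i).2.trans (hfix i)⟩
  have hx0 (i : Fin n) : 0 ≤ x i := (hq.1.1 i).1.trans (hx i).1
  constructor
  · calc ∑ V : Finset (Fin n), SGM loA qA V * ∏ i ∈ V, lo i
        ≤ ∑ i, x i * lo i :=
          sum_SGM_mul_prod_le hq hxq hxs fun i => ⟨(hbd i).1, (hbd i).2.1.trans (hbd i).2.2⟩
      _ ≤ ∑ i, y i * x i := by
          refine sum_le_sum fun i _ => ?_
          rw [mul_comm]
          exact mul_le_mul_of_nonneg_right (hy i).1 (hx0 i)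
  · have hupper := sum_SGM_mul_prod_le hq hxq hxs (f := fun i => 1 - hi i)
      fun i => ⟨sub_nonneg.2 (hbd i).2.2, by linarith [(hbd i).1, (hbd i).2.1]⟩
    have hcompl : ∑ i, x i * (1 - hi i) = 1 - ∑ i, hi i * x i := by
      simp only [mul_sub, mul_one, sum_sub_distrib, hxs, mul_comm]
    have hyx : ∑ i, y i * x i ≤ ∑ i, hi i * x i :=
      sum_le_sum fun i _ => mul_le_mul_of_nonneg_right (hy i).2 (hx0 i)
    linarith

/-- Let `(loA, hiA)` be a coherent probability interval on
`E_A = Fin n` (possibly not good), and let `(loA, qA)` be a good coherent fixing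
of it (same lower bounds, `qA i ≥ hiA i`), with standard good mass
`mA = SGM loA qA`. For fixed `j` and conditional bounds `lo i ≤ hi i` in `[0,1]`,
`p̲ᴮⱼ = ∑_V mA(V) ∏_{i ∈ V} lo i` is below, and
`p̄ᴮⱼ = 1 - ∑_V mA(V) ∏_{i ∈ V} (1 - hi i)` is above, `∑ᵢ yᵢ xᵢ` for every
`xᵢ ∈ [loA i, hiA i]` with `∑ᵢ xᵢ = 1` and every `yᵢ ∈ [lo i, hi i]`. -/
theorem fixed_sgm_bounds_credal (n : ℕ) (loA hiA qA : Fin n → ℝ)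
    (hA : IsCoherent loA hiA) (hq : IsGood loA qA) (hfix : ∀ i, hiA i ≤ qA i)
    (lo hi : Fin n → ℝ) (hbd : ∀ i, 0 ≤ lo i ∧ lo i ≤ hi i ∧ hi i ≤ 1)
    (x : Fin n → ℝ) (hx : ∀ i, loA i ≤ x i ∧ x i ≤ hiA i) (hxs : (∑ i, x i) = 1)
    (y : Fin n → ℝ) (hy : ∀ i, lo i ≤ y i ∧ y i ≤ hi i) :
    (∑ V : Finset (Fin n), SGM loA qA V * ∏ i ∈ V, lo i) ≤ ∑ i, y i * x i ∧
    ∑ i, y i * x i ≤ 1 - ∑ V : Finset (Fin n), SGM loA qA V * ∏ i ∈ V, (1 - hi i) :=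
  fixed_sgm_bounds_credal_general n loA hiA qA hq hfix lo hi hbd x hx hxs y hy
end
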